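/- arXiv:2410.07634 — 6 statements merged into one kernel-verified Lean document; each statement's English description precedes it below -/
import Mathlib

section
/- For any pair of positive integers s and t, there exists a constant C (depending only on s and t) such that for every positive integer r, with n = C·r, every coloring of the edges of the complete bipartite graph K_{n,n} with r colors contains a monochromatic copy of K_{s,t} or a rainbow copy of K_{s,t}. -/
/-- The coloring `c` of the edges of `K_{n₁,n₂}` contains a monochromatic copy of `K_{s,t}`
with the `s`-side in the first part and the `t`-side in the second part. -/
def HasMonoKst {n₁ n₂ r : ℕ} (c : Fin n₁ × Fin n₂ → Fin r) (s t : ℕ) : Prop :=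
  ∃ (A : Finset (Fin n₁)) (B : Finset (Fin n₂)), A.card = s ∧ B.card = t ∧
    ∀ a ∈ A, ∀ b ∈ B, ∀ a' ∈ A, ∀ b' ∈ B, c (a, b) = c (a', b')

/-- The coloring `c` of the edges of `K_{n₁,n₂}` contains a rainbow copy of `K_{s,t}`
with the `s`-side in the first part and the `t`-side in the second part. -/
def HasRainbowKst {n₁ n₂ r : ℕ} (c : Fin n₁ × Fin n₂ → Fin r) (s t : ℕ) : Prop :=
  ∃ (A : Finset (Fin n₁)) (B : Finset (Fin n₂)), A.card = s ∧ B.card = t ∧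
    ∀ a ∈ A, ∀ b ∈ B, ∀ a' ∈ A, ∀ b' ∈ B, (a, b) ≠ (a', b') → c (a, b) ≠ c (a', b')

/-!
Let `m(u)` be the largest number of edges of one colour at a vertex `u`. If there is no rainbow
`K_{s,t}`, then every pair of injections `Fin s → U`, `Fin t → V` repeats a colour on two of the
`st` edges it spans. Few pairs of maps repeat a colour at two given positions with distinct
`V`-coordinates (the other case is symmetric): once all other values are fixed, the second
`V`-endpoint lies in one colour class at its `U`-end. Hence `n² ≤ D · (∑ᵤ m(u) + ∑ᵥ m(v))`
for a constant `D = D(s,t)`.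
On the larger side, averaging gives `M = n / 2D` vertices with `m ≥ M`, and by pigeonhole on
their majority colour `M / r` of them share a colour `k`. Double counting `t`-sets inside their
`k`-neighbourhoods (Kővári–Sós–Turán) bounds their number by a constant when there is no
monochromatic `K_{s,t}`, which `M / r` exceeds once `n` is a large enough multiple of `r`.
-/

open Finset

namespace Nat

theorem pow_le_two_pow_mul_descFactorial {n k : ℕ} (h : 2 * k ≤ n + 2) :
    n ^ k ≤ 2 ^ k * n.descFactorial k :=
  calc n ^ k ≤ (2 * (n + 1 - k)) ^ k := Nat.pow_le_pow_left (by omega) k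
    _ = 2 ^ k * (n + 1 - k) ^ k := mul_pow ..
    _ ≤ 2 ^ k * n.descFactorial k := Nat.mul_le_mul_left _ (pow_sub_le_descFactorial n k)

theorem choose_mul_le_pow_mul_choose {K M k : ℕ} (h : 2 * k ≤ M + 2) :
    (K * M).choose k ≤ (2 * K) ^ k * M.choose k := by
  refine Nat.le_of_mul_le_mul_left ?_ (factorial_pos k)
  calc k ! * (K * M).choose k = (K * M).descFactorial k :=
        (descFactorial_eq_factorial_mul_choose ..).symm
    _ ≤ K ^ k * M ^ k := (descFactorial_le_pow _ k).trans_eq (mul_pow ..)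
    _ ≤ K ^ k * (2 ^ k * M.descFactorial k) :=
        Nat.mul_le_mul_left _ (pow_le_two_pow_mul_descFactorial h)
    _ = k ! * ((2 * K) ^ k * M.choose k) := by
        rw [descFactorial_eq_factorial_mul_choose, mul_pow]; ring

end Nat

namespace Finset

theorem card_mul_choose_le {α β : Type*} [Fintype β] [DecidableEq β] (S : Finset α)
    (W : α → Finset β) {w q k : ℕ} (hw : ∀ u ∈ S, w ≤ #(W u))
    (hk : ∀ T : Finset β, #T = q → #{u ∈ S | T ⊆ W u} ≤ k) :
    #S * w.choose q ≤ (Fintype.card β).choose q * k := by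
  have := card_mul_le_card_mul (fun u (T : Finset β) ↦ T ⊆ W u)
    (s := S) (t := univ.powersetCard q) (m := w.choose q) (n := k) ?_ ?_
  · rwa [card_powersetCard, card_univ] at this
  · intro u hu
    calc w.choose q ≤ #((W u).powersetCard q) := by
          rw [card_powersetCard]; exact Nat.choose_le_choose q (hw u hu)
      _ ≤ _ := card_le_card fun T hT ↦ by
          rw [mem_powersetCard] at hT
          simp [bipartiteAbove, hT.1, hT.2]
  · intro T hT
    exact hk T (mem_powersetCard.1 hT).2

theorem sum_le_mul_card_filter_add {α : Type*} [Fintype α] (f : α → ℕ) {N : ℕ}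
    (hf : ∀ u, f u ≤ N) (M : ℕ) :
    ∑ u, f u ≤ N * #{u | M ≤ f u} + Fintype.card α * M := by
  rw [← sum_filter_add_sum_filter_not univ (fun u ↦ M ≤ f u)]
  gcongr
  · rw [mul_comm, ← smul_eq_mul]
    exact sum_le_card_nsmul _ _ _ fun u _ ↦ hf u
  · calc ∑ u ∈ {u | ¬M ≤ f u}, f u ≤ #{u | ¬M ≤ f u} • M :=
          sum_le_card_nsmul _ _ _ fun u hu ↦ (not_le.1 (mem_filter.1 hu).2).le
      _ ≤ Fintype.card α * M := by rw [smul_eq_mul]; gcongr; exact card_le_univ _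

theorem le_card_filter_of_mul_self_le_mul_sum {α : Type*} [Fintype α] (f : α → ℕ)
    {D M : ℕ} (hD : 0 < D) (hf : ∀ u, f u ≤ Fintype.card α)
    (hα : Fintype.card α = 2 * D * M)
    (hsum : Fintype.card α * Fintype.card α ≤ D * ∑ u, f u) :
    M ≤ #{u | M ≤ f u} := by
  set N := Fintype.card α
  rcases M.eq_zero_or_pos with rfl | hM
  · exact Nat.zero_le _
  have hN : 0 < N := by rw [hα]; positivity
  have hN_le : N ≤ D * (#{u | M ≤ f u} + M) := by
    refine Nat.le_of_mul_le_mul_left (hsum.trans ?_) hN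
    calc D * ∑ u, f u ≤ D * (N * #{u | M ≤ f u} + N * M) :=
          Nat.mul_le_mul_left _ (sum_le_mul_card_filter_add f hf M)
      _ = N * (D * (#{u | M ≤ f u} + M)) := by ring
  exact Nat.le_of_mul_le_mul_left (by linarith) hD

end Finset

section ColorDegree

variable {α β γ : Type*} [Fintype β] [Fintype γ] [DecidableEq γ]

def maxColorDeg (c : α × β → γ) (u : α) : ℕ :=
  univ.sup fun k ↦ #{v | c (u, v) = k}

theorem card_colorClass_le_maxColorDeg (c : α × β → γ) (u : α) (k : γ) :
    #{v | c (u, v) = k} ≤ maxColorDeg c u :=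
  le_sup (f := fun k ↦ #{v | c (u, v) = k}) (mem_univ k)

theorem maxColorDeg_le_card (c : α × β → γ) (u : α) : maxColorDeg c u ≤ Fintype.card β :=
  Finset.sup_le fun _ _ ↦ card_le_univ _

theorem exists_card_colorClass_eq_maxColorDeg [Nonempty γ] (c : α × β → γ) (u : α) :
    ∃ k, #{v | c (u, v) = k} = maxColorDeg c u := by
  obtain ⟨k, -, hk⟩ := exists_mem_eq_sup univ univ_nonempty fun k ↦ #{v | c (u, v) = k}
  exact ⟨k, hk.symm⟩

end ColorDegree

section Monochromatic

variable {n₁ n₂ r s t : ℕ}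

theorem HasMonoKst.of_comp_swap {c : Fin n₁ × Fin n₂ → Fin r}
    (h : HasMonoKst (c ∘ Prod.swap) s t) : HasMonoKst c t s := by
  obtain ⟨A, B, hA, hB, hc⟩ := h
  exact ⟨B, A, hB, hA, fun b hb a ha b' hb' a' ha' ↦ hc a ha b hb a' ha' b' hb'⟩

theorem card_le_of_forall_le_card_colorClass {c : Fin n₁ × Fin n₂ → Fin r}
    (hc : ¬ HasMonoKst c s t) {K M : ℕ} (hn₂ : n₂ = K * M) (hM : 2 * t ≤ M)
    (S : Finset (Fin n₁)) (k : Fin r) (hS : ∀ u ∈ S, M ≤ #{v | c (u, v) = k}) :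
    #S ≤ (2 * K) ^ t * (s - 1) := by
  have hfree (T : Finset (Fin n₂)) (hT : #T = t) :
      #{u ∈ S | T ⊆ ({v | c (u, v) = k} : Finset _)} ≤ s - 1 := by
    by_contra! hlarge
    obtain ⟨A, hAS, hA⟩ := exists_subset_card_eq (Nat.le_of_pred_lt hlarge)
    refine hc ⟨A, T, hA, hT, fun a ha b hb a' ha' b' hb' ↦ ?_⟩
    have hcol : ∀ a ∈ A, ∀ b ∈ T, c (a, b) = k := fun a ha b hb ↦ by
      simpa using (mem_filter.1 (hAS ha)).2 hb
    rw [hcol a ha b hb, hcol a' ha' b' hb']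
  have hcount := card_mul_choose_le S _ hS hfree
  rw [Fintype.card_fin, hn₂] at hcount
  refine Nat.le_of_mul_le_mul_right ?_ (Nat.choose_pos (by omega) : 0 < M.choose t)
  calc #S * M.choose t ≤ (K * M).choose t * (s - 1) := hcount
    _ ≤ (2 * K) ^ t * M.choose t * (s - 1) :=
        Nat.mul_le_mul_right _ (Nat.choose_mul_le_pow_mul_choose (by omega))
    _ = (2 * K) ^ t * (s - 1) * M.choose t := by ring

theorem hasMonoKst_of_mul_self_le_mul_sum_maxColorDeg {n D M E : ℕ}
    (c : Fin n × Fin n → Fin r) (hr : 0 < r) (hD : 0 < D) (hn : n = 2 * D * M)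
    (hM : 2 * t ≤ M) (hrE : r * E ≤ M) (hE : (4 * D) ^ t * (s - 1) < E)
    (hsum : n * n ≤ D * ∑ u, maxColorDeg c u) :
    HasMonoKst c s t := by
  by_contra hc
  have : Nonempty (Fin r) := ⟨⟨0, hr⟩⟩
  have hB : M ≤ #{u | M ≤ maxColorDeg c u} :=
    le_card_filter_of_mul_self_le_mul_sum _ hD
      (maxColorDeg_le_card c)
      ((Fintype.card_fin n).trans hn) (by rwa [Fintype.card_fin])
  choose col hcol using exists_card_colorClass_eq_maxColorDeg c
  obtain ⟨k, -, hk⟩ := exists_le_card_fiber_of_mul_le_card_of_maps_to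
    (s := {u | M ≤ maxColorDeg c u}) (f := col) (fun u _ ↦ mem_univ _) univ_nonempty
    (n := E) (by rw [card_univ, Fintype.card_fin]; omega)
  have := card_le_of_forall_le_card_colorClass hc hn hM
    {u ∈ {u | M ≤ maxColorDeg c u} | col u = k} k fun u hu ↦ by
      rw [mem_filter] at hu
      rw [← hu.2, hcol]
      exact (mem_filter.1 hu.1).2
  rw [show 2 * (2 * D) = 4 * D by ring] at this
  omega

theorem hasMonoKst_or_hasMonoKst_of_two_mul_le {n D M E : ℕ}
    (c : Fin n × Fin n → Fin r) (hr : 0 < r) (hD : 0 < D) (hn : n = 2 * D * M)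
    (hM : 2 * t ≤ M) (hrE : r * E ≤ M) (hE : (4 * D) ^ t * (s - 1) < E)
    (hsum : 2 * (n * n) ≤ D * (∑ u, maxColorDeg c u + ∑ v, maxColorDeg (c ∘ Prod.swap) v)) :
    HasMonoKst c s t ∨ HasMonoKst c t s := by
  rcases le_total (∑ v, maxColorDeg (c ∘ Prod.swap) v) (∑ u, maxColorDeg c u) with h | h
  · exact .inl <| hasMonoKst_of_mul_self_le_mul_sum_maxColorDeg c hr hD hn hM hrE hE
      (by nlinarith [Nat.mul_le_mul_left D h])
  · exact .inr <| .of_comp_swap <| hasMonoKst_of_mul_self_le_mul_sum_maxColorDeg _ hr hD hn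
      hM hrE hE (by nlinarith [Nat.mul_le_mul_left D h])

end Monochromatic

section RepeatedColors

variable {α β γ ι κ : Type*} [Fintype β] [Fintype γ] [DecidableEq γ] [Fintype κ] [DecidableEq κ]

theorem Fintype.sum_comp_eval [Fintype α] [Fintype ι] [DecidableEq ι] {M : Type*}
    [AddCommMonoid M] (g : α → M) (i : ι) :
    ∑ a : ι → α, g (a i) = (Fintype.card α ^ (Fintype.card ι - 1)) • ∑ x, g x := by
  rw [← (Equiv.funSplitAt i α).symm.sum_comp, Fintype.sum_prod_type]
  simp [Fintype.card_subtype_compl, Finset.smul_sum]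

theorem card_filter_color_eq_le (c : α × β → γ) (u u' : α) {j j' : κ} (hj : j ≠ j') :
    #{b : κ → β | c (u, b j) = c (u', b j')} ≤
      Fintype.card β ^ (Fintype.card κ - 1) * maxColorDeg c u' := by
  let e := Equiv.funSplitAt j' β
  calc #{b : κ → β | c (u, b j) = c (u', b j')}
      = #{p : β × ({x // x ≠ j'} → β) | c (u', p.1) = c (u, p.2 ⟨j, hj⟩)} :=
        card_equiv e fun b ↦ by simp [e, eq_comm]
    _ = ∑ f : {x // x ≠ j'} → β, #{y | c (u', y) = c (u, f ⟨j, hj⟩)} := by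
        simp_rw [card_filter]
        exact Fintype.sum_prod_type_right _
    _ ≤ ∑ _f : {x // x ≠ j'} → β, maxColorDeg c u' :=
        sum_le_sum fun f _ ↦ card_colorClass_le_maxColorDeg c u' _
    _ = _ := by simp [Fintype.card_subtype_compl]

variable [Fintype α] [Fintype ι] [DecidableEq ι]

theorem card_filter_pair_color_eq_le (c : α × β → γ) (i i' : ι) {j j' : κ} (hj : j ≠ j') :
    #{x : (ι → α) × (κ → β) | c (x.1 i, x.2 j) = c (x.1 i', x.2 j')} ≤
      Fintype.card α ^ (Fintype.card ι - 1) * Fintype.card β ^ (Fintype.card κ - 1) *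
        ∑ u, maxColorDeg c u := by
  calc #{x : (ι → α) × (κ → β) | c (x.1 i, x.2 j) = c (x.1 i', x.2 j')}
      = ∑ a : ι → α, #{b : κ → β | c (a i, b j) = c (a i', b j')} := by
        simp_rw [card_filter]
        exact Fintype.sum_prod_type _
    _ ≤ ∑ a : ι → α, Fintype.card β ^ (Fintype.card κ - 1) * maxColorDeg c (a i') :=
        sum_le_sum fun a _ ↦ card_filter_color_eq_le c _ _ hj
    _ = _ := by rw [← mul_sum, Fintype.sum_comp_eval, smul_eq_mul]; ring

theorem card_filter_pair_color_eq_le_of_ne (c : α × β → γ) {i i' : ι} {j j' : κ}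
    (h : (i, j) ≠ (i', j')) :
    #{x : (ι → α) × (κ → β) | c (x.1 i, x.2 j) = c (x.1 i', x.2 j')} ≤
      Fintype.card α ^ (Fintype.card ι - 1) * Fintype.card β ^ (Fintype.card κ - 1) *
        (∑ u, maxColorDeg c u + ∑ v, maxColorDeg (c ∘ Prod.swap) v) := by
  by_cases hj : j = j'
  · subst hj
    have hi : i ≠ i' := fun hi ↦ h (by rw [hi])
    calc _ = #{y : (κ → β) × (ι → α) |
            (c ∘ Prod.swap) (y.1 j, y.2 i) = (c ∘ Prod.swap) (y.1 j, y.2 i')} :=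
          card_equiv (Equiv.prodComm _ _) fun x ↦ by simp
      _ ≤ _ := card_filter_pair_color_eq_le _ _ _ hi
      _ ≤ _ := by rw [mul_comm (Fintype.card β ^ _)]; gcongr; exact le_add_self
  · exact (card_filter_pair_color_eq_le c i i' hj).trans (by gcongr; exact le_self_add)

end RepeatedColors

section Rainbow

variable {n₁ n₂ r s t : ℕ}

theorem descFactorial_mul_descFactorial_le_of_not_hasRainbowKst
    (c : Fin n₁ × Fin n₂ → Fin r) (h : ¬ HasRainbowKst c s t) :
    n₁.descFactorial s * n₂.descFactorial t ≤ (s * t) ^ 2 * (n₁ ^ (s - 1) * n₂ ^ (t - 1) *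
      (∑ u, maxColorDeg c u + ∑ v, maxColorDeg (c ∘ Prod.swap) v)) := by
  let bad (p : (Fin s × Fin t) × (Fin s × Fin t)) :
      Finset ((Fin s → Fin n₁) × (Fin t → Fin n₂)) :=
    {x | c (x.1 p.1.1, x.2 p.1.2) = c (x.1 p.2.1, x.2 p.2.2)}
  have hcover (a : Fin s ↪ Fin n₁) (b : Fin t ↪ Fin n₂) :
      ∃ p ∈ (univ : Finset (Fin s × Fin t)).offDiag, (⇑a, ⇑b) ∈ bad p := by
    simp only [HasRainbowKst, not_exists, not_and, not_forall, not_not] at h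
    obtain ⟨_, hx, _, hy, _, hx', _, hy', hne, hc⟩ :=
      h (univ.map a) (univ.map b) (by simp) (by simp)
    obtain ⟨i, -, rfl⟩ := mem_map.1 hx
    obtain ⟨j, -, rfl⟩ := mem_map.1 hy
    obtain ⟨i', -, rfl⟩ := mem_map.1 hx'
    obtain ⟨j', -, rfl⟩ := mem_map.1 hy'
    refine ⟨((i, j), (i', j')), mem_offDiag.2 ⟨mem_univ _, mem_univ _, ?_⟩,
      mem_filter.2 ⟨mem_univ _, hc⟩⟩
    rintro ⟨⟩
    exact hne rfl
  calc n₁.descFactorial s * n₂.descFactorial t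
      = #(univ : Finset ((Fin s ↪ Fin n₁) × (Fin t ↪ Fin n₂))) := by
        simp [Fintype.card_embedding_eq]
    _ ≤ #((univ : Finset (Fin s × Fin t)).offDiag.biUnion bad) :=
        card_le_card_of_injOn (fun e ↦ (⇑e.1, ⇑e.2)) (fun e _ ↦ mem_biUnion.2 (hcover e.1 e.2))
          fun e _ e' _ he ↦ Prod.ext (DFunLike.coe_injective congr($he.1))
            (DFunLike.coe_injective congr($he.2))
    _ ≤ ∑ p ∈ (univ : Finset (Fin s × Fin t)).offDiag, #(bad p) := card_biUnion_le
    _ ≤ #(univ : Finset (Fin s × Fin t)).offDiag • (n₁ ^ (s - 1) * n₂ ^ (t - 1) *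
          (∑ u, maxColorDeg c u + ∑ v, maxColorDeg (c ∘ Prod.swap) v)) :=
        sum_le_card_nsmul _ _ _ fun p hp ↦ by
          simpa using card_filter_pair_color_eq_le_of_ne c (mem_offDiag.1 hp).2.2
    _ ≤ _ := by
        rw [smul_eq_mul, offDiag_card, card_univ, Fintype.card_prod, Fintype.card_fin,
          Fintype.card_fin, sq]
        gcongr
        exact Nat.sub_le _ _

theorem mul_self_le_sum_maxColorDeg_of_not_hasRainbowKst {n : ℕ}
    (c : Fin n × Fin n → Fin r) (hs : 0 < s) (ht : 0 < t) (hns : 2 * s ≤ n + 2)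
    (hnt : 2 * t ≤ n + 2) (h : ¬ HasRainbowKst c s t) :
    n * n ≤ 2 ^ (s + t) * (s * t) ^ 2 *
      (∑ u, maxColorDeg c u + ∑ v, maxColorDeg (c ∘ Prod.swap) v) := by
  rcases Nat.eq_zero_or_pos n with rfl | hn
  · exact Nat.zero_le _
  have hpow (k : ℕ) (hk : 0 < k) : n ^ k = n * n ^ (k - 1) := by
    rw [← pow_succ', Nat.sub_add_cancel hk]
  refine Nat.le_of_mul_le_mul_right ?_ (by positivity : 0 < n ^ (s - 1) * n ^ (t - 1))
  calc n * n * (n ^ (s - 1) * n ^ (t - 1)) = n ^ s * n ^ t := by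
        rw [hpow s hs, hpow t ht]; ring
    _ ≤ 2 ^ s * n.descFactorial s * (2 ^ t * n.descFactorial t) :=
        Nat.mul_le_mul (Nat.pow_le_two_pow_mul_descFactorial hns)
          (Nat.pow_le_two_pow_mul_descFactorial hnt)
    _ = 2 ^ (s + t) * (n.descFactorial s * n.descFactorial t) := by ring
    _ ≤ _ := Nat.mul_le_mul_left _
          (descFactorial_mul_descFactorial_le_of_not_hasRainbowKst c h)
    _ = _ := by ring

end Rainbow

/-- For any pair of positive integers `s, t`, there exists a constant `C` such that for every
positive integer `r`, with `n = C * r`, every `r`-coloring of `K_{n,n}` contains a monochromatic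
or rainbow copy of `K_{s,t}` (in either orientation). -/
theorem bipartite_gallai_ramsey_linear (s t : ℕ) (hs : 0 < s) (ht : 0 < t) :
    ∃ C : ℕ, ∀ r : ℕ, 0 < r → ∀ c : Fin (C * r) × Fin (C * r) → Fin r,
      (HasMonoKst c s t ∨ HasMonoKst c t s) ∨
      (HasRainbowKst c s t ∨ HasRainbowKst c t s) := by
  set D := 2 * (2 ^ (s + t) * (s * t) ^ 2)
  -- the first summand beats the Kővári–Sós–Turán bound, the second keeps `2 t ≤ E r`
  set E := s * (4 * D) ^ t + 2 * t with hE
  refine ⟨2 * D * E, fun r hr c ↦ ?_⟩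
  have hD : 0 < D := by positivity
  have hKST : (4 * D) ^ t * (s - 1) < E :=
    calc (4 * D) ^ t * (s - 1) < (4 * D) ^ t * s := by gcongr; omega
      _ ≤ E := by rw [hE, mul_comm]; exact le_add_right le_rfl
  have hsE : s ≤ E := le_add_right (Nat.le_mul_of_pos_right s (by positivity))
  have hEn : 2 * E ≤ 2 * D * E * r :=
    calc 2 * E = 2 * 1 * E * 1 := by ring
      _ ≤ 2 * D * E * r := by gcongr <;> omega
  have hEr : E ≤ E * r := Nat.le_mul_of_pos_right E hr
  by_contra! ⟨hmono, hrainbow, -⟩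
  refine not_or.2 hmono <| hasMonoKst_or_hasMonoKst_of_two_mul_le c hr hD (mul_assoc ..)
    (by omega) (by rw [mul_comm]) hKST ?_
  exact (Nat.mul_le_mul_left 2 (mul_self_le_sum_maxColorDeg_of_not_hasRainbowKst c hs ht
    (by omega) (by omega) hrainbow)).trans_eq (mul_assoc ..).symm
end

section
/- Let s ≥ t ≥ 2 and let r be a positive integer. Then there exists a coloring of the edges of the complete bipartite graph on parts U = {u_1,…,u_{(t−1)r}} and V = {v_1,…,v_{(t−1)r}} with r colors containing no monochromatic copy of K_{s,t} and no rainbow copy of K_{s,t}; in particular the coloring assigning to edge u_i v_j the color ⌈i/(t−1)⌉ has this property. -/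
/-- For `s ≥ t ≥ 2` and a positive integer `r`, there is an `r`-coloring of
`K_{(t-1)r, (t-1)r}` with no monochromatic and no rainbow copy of `K_{s,t}` (in either
orientation); in particular, the coloring assigning to the edge `u_i v_j` the color
`⌈i/(t-1)⌉` (here, with `0`-indexed vertices and colors, the color `⌊i/(t-1)⌋`) works. -/
theorem bipartite_gallai_ramsey_lower_bound (s t r : ℕ) (hts : t ≤ s) (ht : 2 ≤ t)
    (hr : 0 < r) :
    ∃ c : Fin ((t - 1) * r) × Fin ((t - 1) * r) → Fin r,
      (∀ i j, (c (i, j) : ℕ) = (i : ℕ) / (t - 1)) ∧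
      ¬ (HasMonoKst c s t ∨ HasMonoKst c t s) ∧
      ¬ (HasRainbowKst c s t ∨ HasRainbowKst c t s) := by
  have hm : 0 < t - 1 := by omega
  -- key: a set all of whose elements share a color has card ≤ t-1
  have key : ∀ (A : Finset (Fin ((t - 1) * r))),
      (∀ a ∈ A, ∀ a' ∈ A, (a : ℕ) / (t - 1) = (a' : ℕ) / (t - 1)) → A.card ≤ t - 1 := by
    intro A hA
    have : A.card ≤ (Finset.range (t - 1)).card := by
      refine Finset.card_le_card_of_injOn (fun a => (a : ℕ) % (t - 1)) ?_ ?_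
      · intro a _; simp [Nat.mod_lt _ hm]
      · intro a ha a' ha' h
        have hdiv := hA a ha a' ha'
        have : (a : ℕ) = (a' : ℕ) := by
          conv_lhs => rw [← Nat.div_add_mod (a : ℕ) (t - 1)]
          conv_rhs => rw [← Nat.div_add_mod (a' : ℕ) (t - 1)]
          simp only [] at h
          rw [hdiv, h]
        exact Fin.ext this
    simpa using this
  refine ⟨fun p => ⟨(p.1 : ℕ) / (t - 1),
    Nat.div_lt_of_lt_mul (by simpa [mul_comm] using p.1.2)⟩, fun i j => rfl, ?_, ?_⟩
  · rintro (⟨A, B, hAc, hBc, hmono⟩ | ⟨A, B, hAc, hBc, hmono⟩)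
    · obtain ⟨b, hb⟩ := Finset.card_pos.mp (by omega : 0 < B.card)
      have : A.card ≤ t - 1 := key A fun a ha a' ha' => by
        have := hmono a ha b hb a' ha' b hb
        exact congrArg Fin.val this
      omega
    · obtain ⟨b, hb⟩ := Finset.card_pos.mp (by omega : 0 < B.card)
      have : A.card ≤ t - 1 := key A fun a ha a' ha' => by
        have := hmono a ha b hb a' ha' b hb
        exact congrArg Fin.val this
      omega
  · have rb : ∀ (st : ℕ), 2 ≤ st → ∀ (A B : Finset (Fin ((t - 1) * r))),
        A.card = st → 2 ≤ B.card →
        ¬ (∀ a ∈ A, ∀ b ∈ B, ∀ a' ∈ A, ∀ b' ∈ B, (a, b) ≠ (a', b') →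
          (⟨(a : ℕ) / (t - 1), Nat.div_lt_of_lt_mul (by simpa [mul_comm] using a.2)⟩ : Fin r)
          ≠ ⟨(a' : ℕ) / (t - 1), Nat.div_lt_of_lt_mul (by simpa [mul_comm] using a'.2)⟩) := by
      intro st hst A B hAc hBc h
      obtain ⟨a, ha⟩ := Finset.card_pos.mp (by omega : 0 < A.card)
      obtain ⟨b, hb, b', hb', hbb⟩ := Finset.one_lt_card.mp (by omega : 1 < B.card)
      exact h a ha b hb a ha b' hb' (by simp [hbb]) rfl
    rintro (⟨A, B, hAc, hBc, hrain⟩ | ⟨A, B, hAc, hBc, hrain⟩)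
    · exact rb s (by omega) A B hAc (by omega) hrain
    · exact rb t ht A B hAc (by omega) hrain
end

section
/- Let r be a positive integer and t ≥ 2 an integer. Let n₁ = (6(t−1)−1)r + 2 and n₂ = 2(t−1)·binom(6(t−1), 2) + 3(t−1)(r+1) + 1. Then every coloring of the edges of the complete bipartite graph K_{n₁,n₂} with r colors contains a monochromatic copy of K_{2,t} or a rainbow copy of K_{2,t}, where in each case the side of size 2 lies in the part of size n₁ and the side of size t lies in the part of size n₂. -/
/-!
Suppose `c` has neither copy and write `t = m + 1`. Two distinct rows share at most `m` columns
of any one color. Double counting pairs of rows, this bounds the number of rows whose degree in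
a fixed color reaches `D = ⌈(C(6m,2) + r + 2) / 2⌉` by `6m - 1`, so the choice of `n₁` leaves two
rows `a ≠ a'` all of whose color degrees are below `D`. A maximum set of columns on which
`{a, a'}` spans a rainbow `K_{2,·}` has at most `m` columns, and its at most `2m` colors meet the
color pair of every column on which `a` and `a'` differ. Hence there are at most `r m` columns on
which `a` and `a'` agree and at most `2m · 2(D - 1)` on which they differ: fewer than `n₂`.
-/

open Finset

theorem Nat.le_one_add_choose_two (k : ℕ) : k ≤ 1 + k.choose 2 := by
  rcases k with _ | k
  · simp
  · rw [Nat.choose_succ_succ', Nat.choose_one_right]; omega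

theorem Finset.sum_choose_card_filter {α β : Type*} (R : α → β → Prop)
    [∀ u v, Decidable (R u v)] (s : Finset α) (t : Finset β) (k : ℕ) :
    ∑ v ∈ t, (#{u ∈ s | R u v}).choose k =
      ∑ p ∈ s.powersetCard k, #{v ∈ t | ∀ u ∈ p, R u v} := by
  have hfilter : ∀ v,
      {u ∈ s | R u v}.powersetCard k = {p ∈ s.powersetCard k | ∀ u ∈ p, R u v} := by
    intro v
    ext p
    simp only [mem_powersetCard, mem_filter, subset_iff]
    grind
  simp_rw [← card_powersetCard, hfilter, card_filter]
  exact sum_comm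

/-- The union of a maximum packing meets every `p v`: otherwise `v` could be added to it. -/
theorem Finset.exists_hitting_set_card_le {ι κ : Type*}
    (s : Finset ι) (p : ι → Finset κ) {k m : ℕ} (hne : ∀ v ∈ s, (p v).Nonempty)
    (hk : ∀ v ∈ s, #(p v) ≤ k) (hm : ∀ B ⊆ s, (B : Set ι).PairwiseDisjoint p → #B ≤ m) :
    ∃ C : Finset κ, #C ≤ k * m ∧ ∀ v ∈ s, ¬Disjoint (p v) C := by
  classical
  set packings := s.powerset.filter fun B : Finset ι => (B : Set ι).PairwiseDisjoint p
  obtain ⟨B, hB, hBmax⟩ := exists_max_image packings card ⟨∅, by simp [packings]⟩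
  simp only [packings, mem_filter, mem_powerset] at hB
  refine ⟨B.biUnion p, ?_, fun v hv hdisj => ?_⟩
  · calc #(B.biUnion p) ≤ #B * k := card_biUnion_le_card_mul _ _ _ fun v hv => hk v (hB.1 hv)
      _ ≤ k * m := by rw [mul_comm]; exact Nat.mul_le_mul_left _ (hm B hB.1 hB.2)
  have hvB : v ∉ B := fun hvB =>
    (hne v hv).ne_empty (disjoint_self.1 (hdisj.mono_right (subset_biUnion_of_mem p hvB)))
  have hins : insert v B ∈ packings := by
    simp only [packings, mem_filter, mem_powerset, coe_insert]
    exact ⟨insert_subset hv hB.1,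
      hB.2.insert fun w hw _ => hdisj.mono_right (subset_biUnion_of_mem p hw)⟩
  have := hBmax _ hins
  rw [card_insert_of_notMem hvB] at this
  omega

theorem Finset.exists_pair_forall_notMem {α κ : Type*} [Fintype α] (S : κ → Finset α)
    (s : Finset κ) {k : ℕ} (hS : ∀ i ∈ s, #(S i) ≤ k) (hcard : #s * k + 2 ≤ Fintype.card α) :
    ∃ a a', a ≠ a' ∧ ∀ i ∈ s, a ∉ S i ∧ a' ∉ S i := by
  classical
  have hbig : 1 < #(s.biUnion S)ᶜ := by
    have := card_biUnion_le_card_mul s S k hS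
    rw [card_compl]; omega
  obtain ⟨a, ha, a', ha', hne⟩ := one_lt_card.1 hbig
  simp only [mem_compl, mem_biUnion, not_exists, not_and] at ha ha'
  exact ⟨a, a', hne, fun i hi => ⟨ha i hi, ha' i hi⟩⟩

section Coloring

variable {n₁ n₂ r : ℕ}

def colorNbhd (c : Fin n₁ × Fin n₂ → Fin r) (u : Fin n₁) (i : Fin r) : Finset (Fin n₂) :=
  {v | c (u, v) = i}

def colorPair (c : Fin n₁ × Fin n₂ → Fin r) (a a' : Fin n₁) (v : Fin n₂) : Finset (Fin r) :=
  {c (a, v), c (a', v)}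

variable {c : Fin n₁ × Fin n₂ → Fin r} {m : ℕ} {a a' : Fin n₁}

theorem hasMonoKst_two_of_subset_inter (hne : a ≠ a') {i : Fin r} {B : Finset (Fin n₂)}
    (hB : B ⊆ colorNbhd c a i ∩ colorNbhd c a' i) : HasMonoKst c 2 #B := by
  have hcol : ∀ x ∈ ({a, a'} : Finset (Fin n₁)), ∀ v ∈ B, c (x, v) = i := by
    intro x hx v hv
    have hv' := hB hv
    simp only [colorNbhd, mem_inter, mem_filter, mem_univ, true_and] at hv'
    simp only [mem_insert, mem_singleton] at hx
    rcases hx with rfl | rfl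
    exacts [hv'.1, hv'.2]
  exact ⟨{a, a'}, B, card_pair hne, rfl, fun x hx v hv x' hx' v' hv' => by
    rw [hcol x hx v hv, hcol x' hx' v' hv']⟩

theorem card_inter_colorNbhd_le (hmono : ¬HasMonoKst c 2 (m + 1)) (hne : a ≠ a') (i : Fin r) :
    #(colorNbhd c a i ∩ colorNbhd c a' i) ≤ m := by
  by_contra! h
  obtain ⟨B, hB, hBcard⟩ := exists_subset_card_eq (show m + 1 ≤ #_ from h)
  exact hmono (hBcard ▸ hasMonoKst_two_of_subset_inter hne hB)

theorem hasRainbowKst_two_of_pairwiseDisjoint (hne : a ≠ a') {B : Finset (Fin n₂)}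
    (hB : ∀ v ∈ B, c (a, v) ≠ c (a', v))
    (hdisj : (B : Set (Fin n₂)).PairwiseDisjoint (colorPair c a a')) :
    HasRainbowKst c 2 #B := by
  refine ⟨{a, a'}, B, card_pair hne, rfl, fun x hx v hv x' hx' v' hv' hxv => ?_⟩
  simp only [mem_insert, mem_singleton] at hx hx'
  obtain rfl | hvv' := eq_or_ne v v'
  · have := hB v hv
    rcases hx with rfl | rfl <;> rcases hx' with rfl | rfl <;> grind
  · have hmem : ∀ x, x = a ∨ x = a' → ∀ v, c (x, v) ∈ colorPair c a a' v := by
      rintro x (rfl | rfl) v <;> simp [colorPair]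
    exact disjoint_iff_ne.1 (hdisj hv hv' hvv') _ (hmem x hx v) _ (hmem x' hx' v')

theorem card_le_of_pairwiseDisjoint_colorPair (hrain : ¬HasRainbowKst c 2 (m + 1))
    (hne : a ≠ a') {B : Finset (Fin n₂)} (hB : ∀ v ∈ B, c (a, v) ≠ c (a', v))
    (hdisj : (B : Set (Fin n₂)).PairwiseDisjoint (colorPair c a a')) : #B ≤ m := by
  by_contra! h
  obtain ⟨B', hB', hB'card⟩ := exists_subset_card_eq (show m + 1 ≤ #B from h)
  have := hasRainbowKst_two_of_pairwiseDisjoint hne (fun v hv => hB v (hB' hv))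
    (hdisj.subset hB')
  exact hrain (hB'card ▸ this)

theorem card_le_of_forall_card_colorNbhd_le (hmono : ¬HasMonoKst c 2 (m + 1))
    (hrain : ¬HasRainbowKst c 2 (m + 1)) (hne : a ≠ a') {k : ℕ}
    (ha : ∀ i, #(colorNbhd c a i) ≤ k) (ha' : ∀ i, #(colorNbhd c a' i) ≤ k) :
    n₂ ≤ r * m + 2 * m * (2 * k) := by
  obtain ⟨C, hC, hcover⟩ := exists_hitting_set_card_le {v | c (a, v) ≠ c (a', v)}
    (colorPair c a a') (fun _ _ => insert_nonempty _ _) (fun _ _ => card_le_two)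
    fun B hB hdisj => card_le_of_pairwiseDisjoint_colorPair hrain hne
      (fun v hv => by simpa using hB hv) hdisj
  have hcols : (univ : Finset (Fin n₂)) ⊆
      (univ.biUnion fun i => colorNbhd c a i ∩ colorNbhd c a' i) ∪
        C.biUnion fun i => colorNbhd c a i ∪ colorNbhd c a' i := by
    intro v _
    by_cases hv : c (a, v) = c (a', v)
    · simp [colorNbhd, hv]
    · obtain ⟨i, hi, hiC⟩ := not_disjoint_iff.1 (hcover v (by simpa using hv))
      simp only [colorPair, mem_insert, mem_singleton] at hi
      simp only [colorNbhd, mem_union, mem_biUnion, mem_filter, mem_univ, true_and]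
      grind
  have hagree : #(univ.biUnion fun i => colorNbhd c a i ∩ colorNbhd c a' i) ≤ r * m := by
    simpa using card_biUnion_le_card_mul univ _ _ fun i _ => card_inter_colorNbhd_le hmono hne i
  have hdiffer : #(C.biUnion fun i => colorNbhd c a i ∪ colorNbhd c a' i) ≤ 2 * m * (2 * k) :=
    (card_biUnion_le_card_mul C _ (2 * k) fun i _ => (card_union_le _ _).trans
      (by have := ha i; have := ha' i; omega)).trans (Nat.mul_le_mul_right _ hC)
  calc n₂ = #(univ : Finset (Fin n₂)) := by simp
    _ ≤ _ := card_le_card hcols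
    _ ≤ _ := card_union_le _ _
    _ ≤ r * m + 2 * m * (2 * k) := add_le_add hagree hdiffer

theorem sum_card_colorNbhd_le (hmono : ¬HasMonoKst c 2 (m + 1)) (T : Finset (Fin n₁))
    (i : Fin r) : ∑ u ∈ T, #(colorNbhd c u i) ≤ n₂ + (#T).choose 2 * m := by
  have hpairs :
      ∑ p ∈ T.powersetCard 2, #{v | ∀ u ∈ p, c (u, v) = i} ≤ (#T).choose 2 * m := by
    rw [← card_powersetCard]
    refine sum_le_card_nsmul _ _ _ fun p hp => ?_
    obtain ⟨x, y, hxy, rfl⟩ := card_eq_two.1 (mem_powersetCard.1 hp).2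
    refine le_trans (card_le_card fun v hv => ?_) (card_inter_colorNbhd_le hmono hxy i)
    simp_all [colorNbhd]
  calc ∑ u ∈ T, #(colorNbhd c u i) = ∑ v, #{u ∈ T | c (u, v) = i} := by
        simp only [colorNbhd, card_filter]; exact sum_comm
    _ ≤ ∑ v, (1 + (#{u ∈ T | c (u, v) = i}).choose 2) :=
        sum_le_sum fun v _ => Nat.le_one_add_choose_two _
    _ = n₂ + ∑ p ∈ T.powersetCard 2, #{v | ∀ u ∈ p, c (u, v) = i} := by
        rw [sum_add_distrib, sum_choose_card_filter]; simp; congr!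
    _ ≤ n₂ + (#T).choose 2 * m := by gcongr

theorem card_filter_le_card_colorNbhd_lt (hmono : ¬HasMonoKst c 2 (m + 1)) (i : Fin r)
    {s D : ℕ} (h : n₂ + s.choose 2 * m < s * D) : #{u | D ≤ #(colorNbhd c u i)} < s := by
  by_contra! hs
  obtain ⟨T, hT, rfl⟩ := exists_subset_card_eq hs
  have hsum := card_nsmul_le_sum T (fun u => #(colorNbhd c u i)) D
    fun u hu => (mem_filter.1 (hT hu)).2
  have := sum_card_colorNbhd_le hmono T i
  rw [smul_eq_mul] at hsum
  omega

end Coloring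

theorem bipartite_gallai_ramsey_K2t_general (r t n₁ n₂ : ℕ) (ht : 2 ≤ t)
    (hn₁ : n₁ = (6 * (t - 1) - 1) * r + 2)
    (hn₂ : n₂ = 2 * (t - 1) * Nat.choose (6 * (t - 1)) 2 + 3 * (t - 1) * (r + 1) + 1)
    (c : Fin n₁ × Fin n₂ → Fin r) :
    HasMonoKst c 2 t ∨ HasRainbowKst c 2 t := by
  obtain ⟨m, rfl⟩ : ∃ m, t = m + 1 := ⟨t - 1, by omega⟩
  rw [Nat.add_sub_cancel] at hn₁ hn₂
  by_contra! h
  obtain ⟨hmono, hrain⟩ := h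
  set Q := (6 * m).choose 2
  set D := (Q + r + 3) / 2
  have hD : Q + r + 2 ≤ 2 * D ∧ 2 * D ≤ Q + r + 3 := by omega
  have hhigh : ∀ i, #{u | D ≤ #(colorNbhd c u i)} ≤ 6 * m - 1 := fun i =>
    Nat.le_sub_one_of_lt (card_filter_le_card_colorNbhd_lt hmono i (by
      show n₂ + Q * m < 6 * m * D; nlinarith [Nat.mul_le_mul_left (3 * m) hD.1]))
  obtain ⟨a, a', hne, hlow⟩ := exists_pair_forall_notMem
    (fun i => {u | D ≤ #(colorNbhd c u i)}) univ (fun i _ => hhigh i) (by simp [hn₁, mul_comm])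
  have ha : ∀ i, #(colorNbhd c a i) < D ∧ #(colorNbhd c a' i) < D := fun i => by
    simpa using hlow i (mem_univ i)
  have := card_le_of_forall_card_colorNbhd_le hmono hrain hne (k := D - 1)
    (fun i => Nat.le_sub_one_of_lt (ha i).1) (fun i => Nat.le_sub_one_of_lt (ha i).2)
  nlinarith [Nat.mul_le_mul_left (2 * m) (show 2 * (D - 1) ≤ Q + r + 1 by omega)]

/-- For a positive integer `r`, `t ≥ 2`, `n₁ = (6(t-1)-1)r + 2` and
`n₂ = 2(t-1)·C(6(t-1),2) + 3(t-1)(r+1) + 1`, every `r`-coloring of `K_{n₁,n₂}` contains a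
monochromatic or rainbow copy of `K_{2,t}` with the `2`-side in the part of size `n₁`. -/
theorem bipartite_gallai_ramsey_K2t (r t n₁ n₂ : ℕ) (hr : 0 < r) (ht : 2 ≤ t)
    (hn₁ : n₁ = (6 * (t - 1) - 1) * r + 2)
    (hn₂ : n₂ = 2 * (t - 1) * Nat.choose (6 * (t - 1)) 2 + 3 * (t - 1) * (r + 1) + 1)
    (c : Fin n₁ × Fin n₂ → Fin r) :
    HasMonoKst c 2 t ∨ HasRainbowKst c 2 t :=
  bipartite_gallai_ramsey_K2t_general r t n₁ n₂ ht hn₁ hn₂ c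
end

section
/- Let r, n₁, n₂, s₁, t₁, s₂, t₂ be positive integers and a, b > 0 real numbers. Suppose that every coloring of the edges of the complete bipartite graph K_{n₁,n₂} with r colors contains a rainbow copy of K_{s₁,t₁} with the s₁-side in the part of size n₁, or a monochromatic copy of K_{s₂,t₂} with the s₂-side in the part of size n₁. Let S₁ ⊂ E^{s₁+t₁} be the Cartesian product of a regular (s₁−1)-dimensional simplex of side length a and a regular (t₁−1)-dimensional simplex of side length b, and let S₂ ⊂ E^{s₂+t₂} be the Cartesian product of a regular (s₂−1)-dimensional simplex of side length a and a regular (t₂−1)-dimensional simplex of side length b. Then every coloring of the points of Euclidean space E^{n₁+n₂} with r colors contains a rainbow congruent copy of S₁ or a monochromatic congruent copy of S₂. -/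
/-- `f` maps the configuration `K ⊆ E^m` to a congruent copy of itself in `E^d`: it preserves
all pairwise distances between points of `K` (hence is injective on `K`). -/
def IsCongruentCopy {m d : ℕ} (K : Set (EuclideanSpace ℝ (Fin m)))
    (f : EuclideanSpace ℝ (Fin m) → EuclideanSpace ℝ (Fin d)) : Prop :=
  ∀ x ∈ K, ∀ y ∈ K, dist (f x) (f y) = dist x y

/-- The coloring `χ` of `E^d` contains a monochromatic congruent copy of `K ⊆ E^m`. -/
def HasMonoCopy {r m d : ℕ} (χ : EuclideanSpace ℝ (Fin d) → Fin r)
    (K : Set (EuclideanSpace ℝ (Fin m))) : Prop :=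
  ∃ f, IsCongruentCopy K f ∧ ∃ col : Fin r, ∀ x ∈ K, χ (f x) = col

/-- The coloring `χ` of `E^d` contains a rainbow congruent copy of `K ⊆ E^m`. -/
def HasRainbowCopy {r m d : ℕ} (χ : EuclideanSpace ℝ (Fin d) → Fin r)
    (K : Set (EuclideanSpace ℝ (Fin m))) : Prop :=
  ∃ f, IsCongruentCopy K f ∧ ∀ x ∈ K, ∀ y ∈ K, x ≠ y → χ (f x) ≠ χ (f y)

/-- The vertex set of a regular `(s-1)`-dimensional simplex with side length `a`, realized in
`E^s` as the set of points with exactly one nonzero coordinate, equal to `a/√2`. -/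
def simplexVertices (s : ℕ) (a : ℝ) : Set (EuclideanSpace ℝ (Fin s)) :=
  Set.range fun i : Fin s => EuclideanSpace.single i (a / Real.sqrt 2)

/-- The Cartesian product `K₁ ∗ K₂ ⊆ E^{m₁+m₂}` of configurations `K₁ ⊆ E^{m₁}` and
`K₂ ⊆ E^{m₂}`. -/
def cartesianProd {m₁ m₂ : ℕ} (K₁ : Set (EuclideanSpace ℝ (Fin m₁)))
    (K₂ : Set (EuclideanSpace ℝ (Fin m₂))) : Set (EuclideanSpace ℝ (Fin (m₁ + m₂))) :=
  {z | ∃ x ∈ K₁, ∃ y ∈ K₂,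
    (∀ i : Fin m₁, z (Fin.castAdd m₂ i) = x i) ∧ (∀ j : Fin m₂, z (Fin.natAdd m₁ j) = y j)}

/-! The colouring `χ` of `E^{n₁+n₂}` induces the edge colouring
`(u, v) ↦ χ ((a/√2) e_u + (b/√2) e_{n₁+v})` of `K_{n₁,n₂}`, and the points of `S` are exactly
the points `(a/√2) e_i + (b/√2) e_{s+j}` of `E^{s+t}`. If `α`, `β` enumerate sets `A`, `B` of
sizes `s`, `t`, the linear isometry `e_i ↦ e_{α i}`, `e_{s+j} ↦ e_{n₁+β j}` maps `S` onto the
points coloured by the edges of `A × B`, so a rainbow (monochromatic) `K_{s,t}` gives a rainbow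
(monochromatic) copy of `S`. -/

open Function

namespace EuclideanSpace

variable {ι κ : Type*} [Fintype ι] [DecidableEq ι] [Fintype κ] [DecidableEq κ]

omit [Fintype ι] in
theorem smul_single_one (i : ι) (c : ℝ) : c • single i (1 : ℝ) = single i c := by
  ext; simp

noncomputable def extendByZero {γ : ι → κ} (hγ : Injective γ) :
    EuclideanSpace ℝ ι →ₗᵢ[ℝ] EuclideanSpace ℝ κ :=
  LinearMap.isometryOfOrthonormal (v := (basisFun ι ℝ).toBasis)
    ((basisFun ι ℝ).toBasis.constr ℝ fun i => single (γ i) 1)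
    (by rw [OrthonormalBasis.coe_toBasis]; exact (basisFun ι ℝ).orthonormal)
    (by
      convert orthonormal_single.comp γ hγ
      exact funext fun i => (basisFun ι ℝ).toBasis.constr_basis ℝ _ i)

theorem extendByZero_single {γ : ι → κ} (hγ : Injective γ) (i : ι) (c : ℝ) :
    extendByZero hγ (single i c) = single (γ i) c := by
  rw [← smul_single_one i c, map_smul, ← smul_single_one (γ i) c]
  congr 1
  simp [extendByZero]

end EuclideanSpace

open EuclideanSpace

theorem Fin.castAdd_ne_natAdd {m n : ℕ} (i : Fin m) (j : Fin n) :
    Fin.castAdd n i ≠ Fin.natAdd m j := by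
  simp only [ne_eq, Fin.ext_iff, Fin.val_castAdd, Fin.val_natAdd]
  omega

noncomputable def productVertex (s t : ℕ) (a b : ℝ) (i : Fin s) (j : Fin t) :
    EuclideanSpace ℝ (Fin (s + t)) :=
  single (Fin.castAdd t i) (a / √2) + single (Fin.natAdd s j) (b / √2)

theorem cartesianProd_simplexVertices (s t : ℕ) (a b : ℝ) :
    cartesianProd (simplexVertices s a) (simplexVertices t b) =
      Set.range fun e : Fin s × Fin t => productVertex s t a b e.1 e.2 := by
  ext z
  constructor
  · rintro ⟨_, ⟨i, rfl⟩, _, ⟨j, rfl⟩, hleft, hright⟩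
    refine ⟨(i, j), ?_⟩
    ext k
    induction k using Fin.addCases with
    | left i' => simp [productVertex, hleft, PiLp.single_apply, Fin.castAdd_ne_natAdd]
    | right j' =>
      simp [productVertex, hright, PiLp.single_apply, (Fin.castAdd_ne_natAdd _ _).symm]
  · rintro ⟨⟨i, j⟩, rfl⟩
    exact ⟨_, ⟨i, rfl⟩, _, ⟨j, rfl⟩,
      fun i' => by simp [productVertex, PiLp.single_apply, Fin.castAdd_ne_natAdd],
      fun j' => by simp [productVertex, PiLp.single_apply, (Fin.castAdd_ne_natAdd _ _).symm]⟩

theorem exists_linearIsometry_productVertex {s t n₁ n₂ : ℕ} {α : Fin s → Fin n₁}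
    {β : Fin t → Fin n₂} (hα : Injective α) (hβ : Injective β) (a b : ℝ) :
    ∃ f : EuclideanSpace ℝ (Fin (s + t)) →ₗᵢ[ℝ] EuclideanSpace ℝ (Fin (n₁ + n₂)),
      ∀ i j, f (productVertex s t a b i j) = productVertex n₁ n₂ a b (α i) (β j) := by
  have hγ : Injective (finSumFinEquiv ∘ Sum.map α β ∘ finSumFinEquiv.symm) :=
    finSumFinEquiv.injective.comp ((hα.sumMap hβ).comp finSumFinEquiv.symm.injective)
  refine ⟨extendByZero hγ, fun i j => ?_⟩
  simp [productVertex, extendByZero_single]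

theorem hasRainbowCopy_of_hasRainbowKst {r n₁ n₂ s t : ℕ} {a b : ℝ}
    {χ : EuclideanSpace ℝ (Fin (n₁ + n₂)) → Fin r}
    (h : HasRainbowKst (fun e => χ (productVertex n₁ n₂ a b e.1 e.2)) s t) :
    HasRainbowCopy χ (cartesianProd (simplexVertices s a) (simplexVertices t b)) := by
  obtain ⟨A, B, hA, hB, hrainbow⟩ := h
  set α := A.orderEmbOfFin hA
  set β := B.orderEmbOfFin hB
  obtain ⟨f, hf⟩ := exists_linearIsometry_productVertex α.injective β.injective a b
  refine ⟨f, fun x _ y _ => f.dist_map x y, ?_⟩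
  rw [cartesianProd_simplexVertices]
  rintro _ ⟨⟨i, j⟩, rfl⟩ _ ⟨⟨i', j'⟩, rfl⟩ hne
  rw [hf, hf]
  refine hrainbow _ (A.orderEmbOfFin_mem hA i) _ (B.orderEmbOfFin_mem hB j)
    _ (A.orderEmbOfFin_mem hA i') _ (B.orderEmbOfFin_mem hB j') fun heq => hne ?_
  obtain ⟨hi, hj⟩ := Prod.ext_iff.mp heq
  rw [α.injective hi, β.injective hj]

theorem hasMonoCopy_of_hasMonoKst {r n₁ n₂ s t : ℕ} {a b : ℝ}
    {χ : EuclideanSpace ℝ (Fin (n₁ + n₂)) → Fin r}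
    (h : HasMonoKst (fun e => χ (productVertex n₁ n₂ a b e.1 e.2)) s t) :
    HasMonoCopy χ (cartesianProd (simplexVertices s a) (simplexVertices t b)) := by
  obtain ⟨A, B, hA, hB, hmono⟩ := h
  set α := A.orderEmbOfFin hA
  set β := B.orderEmbOfFin hB
  obtain ⟨f, hf⟩ := exists_linearIsometry_productVertex α.injective β.injective a b
  refine ⟨f, fun x _ y _ => f.dist_map x y, ?_⟩
  rw [cartesianProd_simplexVertices]
  rcases isEmpty_or_nonempty (Fin s × Fin t) with _ | ⟨i₀, j₀⟩
  · exact ⟨χ 0, by simp⟩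
  refine ⟨χ (productVertex n₁ n₂ a b (α i₀) (β j₀)), ?_⟩
  rintro _ ⟨⟨i, j⟩, rfl⟩
  rw [hf]
  exact hmono _ (A.orderEmbOfFin_mem hA i) _ (B.orderEmbOfFin_mem hB j)
    _ (A.orderEmbOfFin_mem hA i₀) _ (B.orderEmbOfFin_mem hB j₀)

theorem translation_lemma_general (r n₁ n₂ s₁ t₁ s₂ t₂ : ℕ)
    (a b : ℝ)
    (hgraph : ∀ c : Fin n₁ × Fin n₂ → Fin r, HasRainbowKst c s₁ t₁ ∨ HasMonoKst c s₂ t₂)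
    (χ : EuclideanSpace ℝ (Fin (n₁ + n₂)) → Fin r) :
    HasRainbowCopy χ (cartesianProd (simplexVertices s₁ a) (simplexVertices t₁ b)) ∨
    HasMonoCopy χ (cartesianProd (simplexVertices s₂ a) (simplexVertices t₂ b)) :=
  (hgraph _).imp hasRainbowCopy_of_hasRainbowKst hasMonoCopy_of_hasMonoKst

/-- Translation lemma: suppose every `r`-coloring of `K_{n₁,n₂}` contains a rainbow
`K_{s₁,t₁}` or a monochromatic `K_{s₂,t₂}` (with the `s`-sides in the part of size `n₁`).
Let `S₁ ⊆ E^{s₁+t₁}` be the Cartesian product of the vertex sets of a regular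
`(s₁-1)`-simplex of side length `a` and a regular `(t₁-1)`-simplex of side length `b`, and
define `S₂ ⊆ E^{s₂+t₂}` similarly. Then every `r`-coloring of `E^{n₁+n₂}` contains a
rainbow congruent copy of `S₁` or a monochromatic congruent copy of `S₂`. -/
theorem translation_lemma (r n₁ n₂ s₁ t₁ s₂ t₂ : ℕ) (hr : 0 < r) (hn₁ : 0 < n₁)
    (hn₂ : 0 < n₂) (hs₁ : 0 < s₁) (ht₁ : 0 < t₁) (hs₂ : 0 < s₂) (ht₂ : 0 < t₂)
    (a b : ℝ) (ha : 0 < a) (hb : 0 < b)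
    (hgraph : ∀ c : Fin n₁ × Fin n₂ → Fin r, HasRainbowKst c s₁ t₁ ∨ HasMonoKst c s₂ t₂)
    (χ : EuclideanSpace ℝ (Fin (n₁ + n₂)) → Fin r) :
    HasRainbowCopy χ (cartesianProd (simplexVertices s₁ a) (simplexVertices t₁ b)) ∨
    HasMonoCopy χ (cartesianProd (simplexVertices s₂ a) (simplexVertices t₂ b)) :=
  translation_lemma_general r n₁ n₂ s₁ t₁ s₂ t₂ a b hgraph χ
end

section
/- For any positive integers s and t and any real numbers a, b > 0, let Q be the Cartesian product of the vertex set of a regular (s−1)-dimensional simplex with side length a and the vertex set of a regular (t−1)-dimensional simplex with side length b. Then there exists a constant C (depending only on s and t) such that for every positive integer r, every coloring of Euclidean space E^{C·r} with r colors contains a monochromatic congruent copy of Q or a rainbow congruent copy of Q. -/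
/-!
Put the simplex `Q_{m,·}` on the first `m` coordinates of `E^{C r}` and `Q_{n,·}` on the last `n`,
where `m + n = C r`. Then the vertex `(i, j)` of `Q_{m,a} ∗ Q_{n,b}` is a cell of an `m × n`
grid, and any `s` rows and `t` columns of the grid carry a congruent copy of
`Q_{s,a} ∗ Q_{t,b}`, because relabelling coordinates along an injection is an isometry. So it
suffices to find, in every `r`-colouring of an `(M r) × (N r)` grid, an `s × t` subgrid that is
monochromatic or rainbow.

If many rows contain some colour with density at least `1/D`, pigeonhole on that colour and a
Kővári–Sós–Turán double count give a monochromatic subgrid; the same argument applies to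
columns, restricted to the remaining rows. Otherwise every colour is sparse in every remaining
row and column. Then `s` rows can be chosen greedily so that each new row clashes with the
previous ones on at most half of the surviving columns, and finally `t` of the surviving columns
are chosen greedily so that no two of them share a colour on these rows: a rainbow subgrid.
-/

open Finset Function

section Grid

variable {α β κ : Type*}

def IsMonoGrid (c : α → β → κ) (I : Finset α) (J : Finset β) : Prop :=
  ∃ k, ∀ i ∈ I, ∀ j ∈ J, c i j = k

def IsRainbowGrid (c : α → β → κ) (I : Finset α) (J : Finset β) : Prop :=
  Set.InjOn (uncurry c) (↑I ×ˢ ↑J)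

theorem Finset.card_filter_exists_le_sum (A : Finset α) (B : Finset β)
    (p : α → β → Prop) [∀ a b, Decidable (p a b)] :
    #{a ∈ A | ∃ b ∈ B, p a b} ≤ ∑ b ∈ B, #{a ∈ A | p a b} := by
  classical
  calc #{a ∈ A | ∃ b ∈ B, p a b} ≤ #(B.biUnion fun b => {a ∈ A | p a b}) :=
        card_le_card fun a ha => by
          obtain ⟨ha, b, hb, hab⟩ := mem_filter.1 ha
          exact mem_biUnion.2 ⟨b, hb, mem_filter.2 ⟨ha, hab⟩⟩
    _ ≤ _ := card_biUnion_le

section Dense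

variable (p : α → β → Prop) [∀ i j, Decidable (p i j)] {A : Finset α} {U : Finset β} {s t D : ℕ}

theorem card_le_two_mul_card_filter_le_card_filter (hA₀ : A.Nonempty)
    (hA : ∀ i ∈ A, #U ≤ D * #{j ∈ U | p i j}) (hAD : 2 * s * D ≤ #A) :
    #U ≤ 2 * D * #{j ∈ U | s ≤ #{i ∈ A | p i j}} := by
  set G := {j ∈ U | s ≤ #{i ∈ A | p i j}}
  have hedges : #A * #U ≤ D * ∑ j ∈ U, #{i ∈ A | p i j} :=
    calc #A * #U = ∑ i ∈ A, #U := by rw [sum_const, smul_eq_mul]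
      _ ≤ ∑ i ∈ A, D * #{j ∈ U | p i j} := sum_le_sum hA
      _ = D * ∑ j ∈ U, #{i ∈ A | p i j} := by
        rw [← mul_sum]
        exact congrArg _ (sum_card_bipartiteAbove_eq_sum_card_bipartiteBelow p)
  have hdeg : ∑ j ∈ U, #{i ∈ A | p i j} ≤ #G * #A + #U * s :=
    calc ∑ j ∈ U, #{i ∈ A | p i j}
        ≤ ∑ j ∈ U, ((if s ≤ #{i ∈ A | p i j} then #A else 0) + s) := by
          refine sum_le_sum fun j _ => ?_
          split_ifs
          · exact (card_filter_le _ _).trans (Nat.le_add_right _ _)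
          · omega
      _ = #G * #A + #U * s := by
          rw [sum_add_distrib, ← sum_filter, sum_const, sum_const, smul_eq_mul, smul_eq_mul]
  have hlow := Nat.mul_le_mul_right #U hAD
  have : #A * #U ≤ #A * (2 * D * #G) := by nlinarith
  exact Nat.le_of_mul_le_mul_left this hA₀.card_pos

theorem exists_subgrid_of_lt_card_filter_le_card_filter
    (hG : (t - 1) * (#A).choose s < #{j ∈ U | s ≤ #{i ∈ A | p i j}}) :
    ∃ I ⊆ A, ∃ J ⊆ U, #I = s ∧ #J = t ∧ ∀ i ∈ I, ∀ j ∈ J, p i j := by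
  set G := {j ∈ U | s ≤ #{i ∈ A | p i j}}
  obtain ⟨I, hI, hIG⟩ : ∃ I ∈ A.powersetCard s, t - 1 < #{j ∈ G | ∀ i ∈ I, p i j} := by
    by_contra! h
    have hcover : ∀ j ∈ G, 1 ≤ #{I ∈ A.powersetCard s | ∀ i ∈ I, p i j} := by
      intro j hj
      obtain ⟨I, hI, hIs⟩ := exists_subset_card_eq (mem_filter.1 hj).2
      refine card_pos.2 ⟨I, mem_filter.2 ⟨mem_powersetCard.2 ⟨hI.trans (filter_subset _ _), hIs⟩,
        fun i hi => (mem_filter.1 (hI hi)).2⟩⟩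
    have := card_mul_le_card_mul (fun j I => ∀ i ∈ I, p i j) hcover h
    rw [card_powersetCard, mul_one, mul_comm] at this
    omega
  obtain ⟨J, hJ, hJt⟩ := exists_subset_card_eq (Nat.le_of_pred_lt hIG)
  rw [mem_powersetCard] at hI
  exact ⟨I, hI.1, J, hJ.trans ((filter_subset _ _).trans (filter_subset _ _)), hI.2, hJt,
    fun i hi j hj => (mem_filter.1 (hJ hj)).2 i hi⟩

theorem exists_subgrid_of_dense (hs : 0 < s) (hD : 0 < D)
    (hA : ∀ i ∈ A, #U ≤ D * #{j ∈ U | p i j}) (hAD : 2 * s * D ≤ #A)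
    (hU : 2 * D * ((t - 1) * (#A).choose s + 1) ≤ #U) :
    ∃ I ⊆ A, ∃ J ⊆ U, #I = s ∧ #J = t ∧ ∀ i ∈ I, ∀ j ∈ J, p i j := by
  have hA₀ : A.Nonempty := card_pos.1 (lt_of_lt_of_le (by positivity) hAD)
  refine exists_subgrid_of_lt_card_filter_le_card_filter p ?_
  have := hU.trans (card_le_two_mul_card_filter_le_card_filter p hA₀ hA hAD)
  exact Nat.le_of_mul_le_mul_left this (by positivity)

end Dense

theorem exists_isMonoGrid_of_dense [Fintype κ] [Nonempty κ] [DecidableEq κ] (c : α → β → κ)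
    {A : Finset α} {U : Finset β} {s t D X : ℕ} (hs : 0 < s) (hD : 0 < D)
    (hA : ∀ i ∈ A, ∃ k, #U ≤ D * #{j ∈ U | c i j = k}) (hX : X * Fintype.card κ ≤ #A)
    (hXD : 2 * s * D ≤ X) (hU : 2 * D * ((t - 1) * X.choose s + 1) ≤ #U) :
    ∃ I ⊆ A, ∃ J ⊆ U, #I = s ∧ #J = t ∧ IsMonoGrid c I J := by
  choose! k hk using hA
  obtain ⟨k₀, -, hk₀⟩ := exists_le_card_fiber_of_mul_le_card_of_maps_to
    (fun i _ => mem_univ (k i)) univ_nonempty (by rwa [card_univ, mul_comm])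
  obtain ⟨A', hA', rfl⟩ := exists_subset_card_eq hk₀
  have hA'k : ∀ i ∈ A', #U ≤ D * #{j ∈ U | c i j = k₀} := fun i hi => by
    obtain ⟨hiA, rfl⟩ := mem_filter.1 (hA' hi)
    exact hk i hiA
  obtain ⟨I, hI, J, hJ, hIs, hJt, hIJ⟩ := exists_subgrid_of_dense _ hs hD hA'k hXD hU
  exact ⟨I, hI.trans (hA'.trans (filter_subset _ _)), J, hJ, hIs, hJt, k₀, hIJ⟩

theorem Finset.exists_subset_card_eq_pairwise_of_mul_card_filter_le {J : Finset β}
    (r : β → β → Prop) [DecidableRel r] (hrefl : ∀ j, r j j)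
    (hsymm : ∀ j j', r j j' → r j' j) {p q t : ℕ}
    (hdeg : ∀ j' ∈ J, q * #{j ∈ J | r j j'} ≤ p) (hJ : t * p < q * #J) :
    ∃ T ⊆ J, #T = t ∧ (T : Set β).Pairwise fun j j' => ¬ r j j' := by
  classical
  induction t with
  | zero => exact ⟨∅, empty_subset _, card_empty, by simp⟩
  | succ t ih =>
    have htp : t * p < q * #J := lt_of_le_of_lt (Nat.mul_le_mul_right _ t.le_succ) hJ
    obtain ⟨T, hTJ, hTt, hT⟩ := ih htp
    have hB : q * #{j ∈ J | ∃ j' ∈ T, r j j'} < q * #J :=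
      calc q * #{j ∈ J | ∃ j' ∈ T, r j j'} ≤ q * ∑ j' ∈ T, #{j ∈ J | r j j'} :=
            Nat.mul_le_mul_left _ (card_filter_exists_le_sum _ _ _)
        _ = ∑ j' ∈ T, q * #{j ∈ J | r j j'} := mul_sum _ _ _
        _ ≤ ∑ _j' ∈ T, p := sum_le_sum fun j' hj' => hdeg j' (hTJ hj')
        _ = t * p := by rw [sum_const, hTt, smul_eq_mul]
        _ < q * #J := htp
    obtain ⟨j, hjJ, hjB⟩ := exists_mem_notMem_of_card_lt_card (Nat.lt_of_mul_lt_mul_left hB)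
    have hjT : ∀ j' ∈ T, ¬ r j j' := fun j' hj' h => hjB (mem_filter.2 ⟨hjJ, j', hj', h⟩)
    have hj : j ∉ T := fun h => hjT j h (hrefl j)
    refine ⟨insert j T, insert_subset hjJ hTJ, by rw [card_insert_of_notMem hj, hTt], ?_⟩
    rw [coe_insert, Set.pairwise_insert]
    exact ⟨hT, fun j' hj' _ => ⟨hjT j' hj', fun h => hjT j' hj' (hsymm _ _ h)⟩⟩

section Sparse

variable [DecidableEq α] [DecidableEq κ] (c : α → β → κ) {R : Finset α} {S : Finset β} {s : ℕ}

theorem exists_mem_sdiff_two_mul_card_filter_le (hR : 2 * s ≤ #R)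
    (hS : ∀ j ∈ S, ∀ k, 4 * s * #{i ∈ R | c i j = k} ≤ #R) {I : Finset α} (hIR : I ⊆ R)
    (hIs : #I < s) {J : Finset β} (hJS : J ⊆ S) :
    ∃ i ∈ R \ I, 2 * #{j ∈ J | ∃ i' ∈ I, c i j = c i' j} ≤ #J := by
  have hcol : ∀ j ∈ J, 4 * s * #{i ∈ R \ I | ∃ i' ∈ I, c i j = c i' j} ≤ s * #R := fun j hj =>
    calc 4 * s * #{i ∈ R \ I | ∃ i' ∈ I, c i j = c i' j}
        ≤ 4 * s * ∑ i' ∈ I, #{i ∈ R | c i j = c i' j} :=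
          Nat.mul_le_mul_left _ ((card_le_card (filter_subset_filter _ sdiff_subset)).trans
            (card_filter_exists_le_sum _ _ _))
      _ = ∑ i' ∈ I, 4 * s * #{i ∈ R | c i j = c i' j} := mul_sum _ _ _
      _ ≤ ∑ _i' ∈ I, #R := sum_le_sum fun i' _ => hS j (hJS hj) _
      _ ≤ s * #R := by rw [sum_const, smul_eq_mul]; exact Nat.mul_le_mul_right _ hIs.le
  set K := ∑ j ∈ J, #{i ∈ R \ I | ∃ i' ∈ I, c i j = c i' j}
  have hK : 4 * s * K ≤ #J * (s * #R) := by
    rw [mul_sum]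
    exact sum_le_card_nsmul _ _ _ hcol
  have hRI : #R ≤ 2 * #(R \ I) := by rw [card_sdiff_of_subset hIR]; omega
  have hsum : 2 * K ≤ #(R \ I) * #J := by
    have := Nat.mul_le_mul_left (#J * s) hRI
    exact Nat.le_of_mul_le_mul_left (by nlinarith : 4 * s * (2 * K) ≤ 4 * s * (#(R \ I) * #J))
      (by omega)
  have hne : (R \ I).Nonempty := card_pos.1 (by rw [card_sdiff_of_subset hIR]; omega)
  refine exists_le_of_sum_le hne ?_
  rw [← mul_sum, sum_const, smul_eq_mul]
  exact (congrArg (2 * ·) (sum_card_bipartiteAbove_eq_sum_card_bipartiteBelow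
    (fun i j => ∃ i' ∈ I, c i j = c i' j))).trans_le hsum

theorem exists_subset_injOn_of_sparse (hR : 2 * s ≤ #R)
    (hS : ∀ j ∈ S, ∀ k, 4 * s * #{i ∈ R | c i j = k} ≤ #R) :
    ∀ u ≤ s, ∃ I ⊆ R, #I = u ∧ ∃ J ⊆ S, #S ≤ 2 ^ u * #J ∧ ∀ j ∈ J, Set.InjOn (c · j) I
  | 0, _ => ⟨∅, empty_subset _, card_empty, S, Subset.rfl, by simp, fun _ _ => by simp⟩
  | u + 1, hu => by
    obtain ⟨I, hIR, hIu, J, hJS, hSJ, hinj⟩ := exists_subset_injOn_of_sparse hR hS u (by omega)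
    obtain ⟨i, hi, hkill⟩ := exists_mem_sdiff_two_mul_card_filter_le c hR hS hIR (by omega) hJS
    rw [mem_sdiff] at hi
    set J' := {j ∈ J | ¬∃ i' ∈ I, c i j = c i' j}
    have hJ : #{j ∈ J | ∃ i' ∈ I, c i j = c i' j} + #J' = #J := card_filter_add_card_filter_not _
    refine ⟨insert i I, insert_subset hi.1 hIR, by rw [card_insert_of_notMem hi.2, hIu], J',
      (filter_subset _ _).trans hJS, ?_, fun j hj => ?_⟩
    · calc #S ≤ 2 ^ u * #J := hSJ
        _ ≤ 2 ^ u * (2 * #J') := Nat.mul_le_mul_left _ (by omega)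
        _ = 2 ^ (u + 1) * #J' := by ring
    · obtain ⟨hjJ, hj⟩ := mem_filter.1 hj
      rw [coe_insert, Set.injOn_insert (mem_coe.not.2 hi.2)]
      exact ⟨hinj j hjJ, fun ⟨i', hi', h⟩ => hj ⟨i', hi', h.symm⟩⟩

theorem exists_isRainbowGrid_of_sparse {t : ℕ} (hs : 0 < s) (ht : 0 < t) (hR : 2 * s ≤ #R)
    (hS₀ : S.Nonempty) (hcol : ∀ j ∈ S, ∀ k, 4 * s * #{i ∈ R | c i j = k} ≤ #R)
    (hrow : ∀ i ∈ R, ∀ k, 2 ^ (s + 1) * s ^ 2 * t * #{j ∈ S | c i j = k} ≤ #S) :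
    ∃ I ⊆ R, ∃ J ⊆ S, #I = s ∧ #J = t ∧ IsRainbowGrid c I J := by
  obtain ⟨I, hIR, hIs, J, hJS, hSJ, hinj⟩ := exists_subset_injOn_of_sparse c hR hcol s le_rfl
  obtain ⟨i₀, hi₀⟩ : I.Nonempty := card_pos.1 (hIs ▸ hs)
  set q := 2 ^ (s + 1) * s ^ 2 * t
  set r : β → β → Prop := fun j j' => ∃ i ∈ I, ∃ i' ∈ I, c i j = c i' j'
  have hdeg : ∀ j' ∈ J, q * #{j ∈ J | r j j'} ≤ s ^ 2 * #S := fun j' _ =>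
    calc q * #{j ∈ J | r j j'}
        ≤ q * ∑ i ∈ I, ∑ i' ∈ I, #{j ∈ S | c i j = c i' j'} := by
          refine Nat.mul_le_mul_left _ ((card_filter_exists_le_sum _ _ _).trans
            (sum_le_sum fun i _ => (card_filter_exists_le_sum _ _ _).trans
              (sum_le_sum fun i' _ => card_le_card (filter_subset_filter _ hJS))))
      _ = ∑ i ∈ I, ∑ i' ∈ I, q * #{j ∈ S | c i j = c i' j'} := by simp only [mul_sum]
      _ ≤ ∑ _i ∈ I, ∑ _i' ∈ I, #S :=
          sum_le_sum fun i hi => sum_le_sum fun i' _ => hrow i (hIR hi) _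
      _ = s ^ 2 * #S := by simp only [sum_const, smul_eq_mul, hIs]; ring
  -- `J` keeps `#S / 2^s` columns, while each of them clashes with at most `#S / (2^(s+1) t)`
  -- columns; hence `t` pairwise non-clashing columns can be chosen greedily.
  have hJ₀ : 0 < #J := Nat.pos_of_mul_pos_left (hS₀.card_pos.trans_le hSJ)
  have hJ : t * (s ^ 2 * #S) < q * #J :=
    calc t * (s ^ 2 * #S) ≤ t * (s ^ 2 * (2 ^ s * #J)) := by gcongr
      _ < 2 * (t * (s ^ 2 * (2 ^ s * #J))) := by
          have : 0 < t * (s ^ 2 * (2 ^ s * #J)) := by positivity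
          omega
      _ = q * #J := by ring
  obtain ⟨T, hTJ, hTt, hT⟩ := exists_subset_card_eq_pairwise_of_mul_card_filter_le r
    (fun _ => ⟨i₀, hi₀, i₀, hi₀, rfl⟩) (fun _ _ ⟨i, hi, i', hi', h⟩ => ⟨i', hi', i, hi, h.symm⟩)
    hdeg hJ
  refine ⟨I, hIR, T, hTJ.trans hJS, hIs, hTt, ?_⟩
  rintro ⟨i, j⟩ ⟨hi, hj⟩ ⟨i', j'⟩ ⟨hi', hj'⟩ h
  obtain rfl | hjj := eq_or_ne j j'
  · exact Prod.ext (hinj j (hTJ hj) hi hi' h) rfl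
  · exact absurd ⟨i, hi, i', hi', h⟩ (hT hj hj' hjj)

end Sparse

theorem exists_isMonoGrid_or_isRainbowGrid_of_sparse_rows [Fintype β] [Fintype κ] [Nonempty κ]
    [DecidableEq α] [DecidableEq κ] (c : α → β → κ) {R : Finset α} {s t : ℕ} (hs : 0 < s)
    (ht : 0 < t) (hR : 8 * s * ((s - 1) * (8 * s * t).choose t + 1) ≤ #R)
    (hβ : 16 * s * t * Fintype.card κ ≤ Fintype.card β)
    (hrow : ∀ i ∈ R, ∀ k, 2 ^ (s + 2) * s ^ 2 * t * #{j | c i j = k} < Fintype.card β) :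
    ∃ I ⊆ R, ∃ J : Finset β, #I = s ∧ #J = t ∧ (IsMonoGrid c I J ∨ IsRainbowGrid c I J) := by
  by_cases hcols : 8 * s * t * Fintype.card κ ≤ #{j | ∃ k, #R ≤ 4 * s * #{i ∈ R | c i j = k}}
  · obtain ⟨J, -, I, hIR, hJt, hIs, k, hk⟩ := exists_isMonoGrid_of_dense (fun j i => c i j)
      (U := R) ht (by positivity) (fun j hj => (mem_filter.1 hj).2) hcols (by linarith)
      (by linarith)
    exact ⟨I, hIR, J, hIs, hJt, .inl ⟨k, fun i hi j hj => hk j hj i hi⟩⟩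
  set S : Finset β := {j | ¬∃ k, #R ≤ 4 * s * #{i ∈ R | c i j = k}}
  have hS : Fintype.card β < 2 * #S := by
    have : #{j | ∃ k, #R ≤ 4 * s * #{i ∈ R | c i j = k}} + #S = Fintype.card β := by
      rw [← card_univ]
      exact card_filter_add_card_filter_not _
    have : 16 * s * t * Fintype.card κ = 2 * (8 * s * t * Fintype.card κ) := by ring
    omega
  have h2sR : 2 * s ≤ #R :=
    calc 2 * s ≤ 8 * s * 1 := by omega
      _ ≤ _ := Nat.mul_le_mul_left _ (Nat.le_add_left _ _)
      _ ≤ #R := hR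
  obtain ⟨I, hIR, J, -, hIs, hJt, hIJ⟩ := exists_isRainbowGrid_of_sparse c (S := S) hs ht h2sR
    (card_pos.1 (by omega)) (fun j hj k => (not_le.1 (not_exists.1 (mem_filter.1 hj).2 k)).le)
    (fun i hi k => by
      have hsub : #{j ∈ S | c i j = k} ≤ #{j | c i j = k} :=
        card_le_card (filter_subset_filter _ (subset_univ _))
      have := Nat.mul_le_mul_left (2 ^ (s + 2) * s ^ 2 * t) hsub
      have hrow := hrow i hi k
      rw [pow_succ] at this hrow
      linarith)
  exact ⟨I, hIR, J, hIs, hJt, .inr hIJ⟩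

theorem exists_isMonoGrid_or_isRainbowGrid (s t : ℕ) (hs : 0 < s) (ht : 0 < t) :
    ∃ M N : ℕ, ∀ {α β κ : Type*} [Fintype α] [Fintype β] [Fintype κ] [Nonempty κ]
      [DecidableEq κ] (c : α → β → κ), M * Fintype.card κ ≤ Fintype.card α →
      N * Fintype.card κ ≤ Fintype.card β →
      ∃ (I : Finset α) (J : Finset β), #I = s ∧ #J = t ∧
        (IsMonoGrid c I J ∨ IsRainbowGrid c I J) := by
  classical
  set D := 2 ^ (s + 2) * s ^ 2 * t
  set X := 2 * s * D
  set K := 8 * s * ((s - 1) * (8 * s * t).choose t + 1)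
  set L := 2 * D * ((t - 1) * X.choose s + 1)
  refine ⟨X + K, L + 16 * s * t, fun {α β κ} _ _ _ _ _ c hα hβ => ?_⟩
  have hr : 0 < Fintype.card κ := Fintype.card_pos
  have hKr := Nat.le_mul_of_pos_right K hr
  have hLr := Nat.le_mul_of_pos_right L hr
  rw [add_mul] at hα hβ
  by_cases hrows : X * Fintype.card κ ≤ #{i | ∃ k, Fintype.card β ≤ D * #{j | c i j = k}}
  · obtain ⟨I, -, J, -, hIs, hJt, hIJ⟩ := exists_isMonoGrid_of_dense c (U := univ) (t := t) hs
      (by positivity) (fun i hi => (mem_filter.1 hi).2) hrows le_rfl (by rw [card_univ]; omega)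
    exact ⟨I, J, hIs, hJt, .inl hIJ⟩
  set R : Finset α := {i | ¬∃ k, Fintype.card β ≤ D * #{j | c i j = k}}
  have hR : K ≤ #R := by
    have : #{i | ∃ k, Fintype.card β ≤ D * #{j | c i j = k}} + #R = Fintype.card α := by
      rw [← card_univ]
      exact card_filter_add_card_filter_not _
    omega
  obtain ⟨I, -, J, hIs, hJt, hIJ⟩ := exists_isMonoGrid_or_isRainbowGrid_of_sparse_rows c hs ht hR
    (by omega) fun i hi k => not_le.1 (not_exists.1 (mem_filter.1 hi).2 k)
  exact ⟨I, J, hIs, hJt, hIJ⟩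

end Grid

section Geometry

variable {ι κ ι₁ ι₂ : Type*} [Fintype ι] [Fintype κ] [DecidableEq ι] [DecidableEq κ]

noncomputable def EuclideanSpace.embedCoords (φ : ι ↪ κ) :
    EuclideanSpace ℝ ι →ₗᵢ[ℝ] EuclideanSpace ℝ κ :=
  let b := (EuclideanSpace.basisFun ι ℝ).toBasis
  LinearMap.isometryOfOrthonormal (b.constr ℝ fun i => EuclideanSpace.single (φ i) 1)
    (v := b)
    (by simpa only [b, OrthonormalBasis.coe_toBasis] using
      (EuclideanSpace.basisFun ι ℝ).orthonormal) <| by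
      have h : (b.constr ℝ fun i => EuclideanSpace.single (φ i) 1) ∘ b =
          EuclideanSpace.basisFun κ ℝ ∘ φ := by
        ext1 i
        simp [b]
      rw [h]
      exact (EuclideanSpace.basisFun κ ℝ).orthonormal.comp φ φ.injective

theorem EuclideanSpace.embedCoords_single (φ : ι ↪ κ) (i : ι) (x : ℝ) :
    embedCoords φ (single i x) = single (φ i) x := by
  rw [show single i x = x • single i (1 : ℝ) by ext j; simp [PiLp.single_apply]]
  ext j
  simp [embedCoords, PiLp.single_apply]

/-- With `e = finSumFinEquiv`, `u = a / √2` and `v = b / √2` these are the points of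
`cartesianProd (simplexVertices m a) (simplexVertices n b)`; a general `e` places the two
simplices on disjoint sets of coordinates. -/
noncomputable def prodSimplexVertex (e : ι₁ ⊕ ι₂ ↪ κ) (u v : ℝ) (i : ι₁) (j : ι₂) :
    EuclideanSpace ℝ κ :=
  EuclideanSpace.single (e (.inl i)) u + EuclideanSpace.single (e (.inr j)) v

theorem embedCoords_prodSimplexVertex (e : ι₁ ⊕ ι₂ ↪ ι) (φ : ι ↪ κ) (u v : ℝ) (i : ι₁)
    (j : ι₂) :
    EuclideanSpace.embedCoords φ (prodSimplexVertex e u v i j) =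
      prodSimplexVertex (e.trans φ) u v i j := by
  simp [prodSimplexVertex, EuclideanSpace.embedCoords_single]

end Geometry

theorem exists_eq_prodSimplexVertex_of_mem {s t : ℕ} {a b : ℝ}
    {z : EuclideanSpace ℝ (Fin (s + t))}
    (hz : z ∈ cartesianProd (simplexVertices s a) (simplexVertices t b)) :
    ∃ α β, z = prodSimplexVertex finSumFinEquiv.toEmbedding (a / √2) (b / √2) α β := by
  obtain ⟨-, ⟨α, rfl⟩, -, ⟨β, rfl⟩, hα, hβ⟩ := hz
  refine ⟨α, β, ?_⟩
  ext k
  induction k using Fin.addCases with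
  | left i => simp [prodSimplexVertex, hα, PiLp.single_apply, Fin.ext_iff]; omega
  | right j => simp [prodSimplexVertex, hβ, PiLp.single_apply, Fin.ext_iff]; omega

theorem hasMonoCopy_or_hasRainbowCopy_of_subgrid {r s t m n d : ℕ}
    (χ : EuclideanSpace ℝ (Fin d) → Fin r) (e : Fin m ⊕ Fin n ↪ Fin d) (a b : ℝ)
    {I : Finset (Fin m)} {J : Finset (Fin n)} (hI : #I = s) (hJ : #J = t)
    (h : IsMonoGrid (fun i j => χ (prodSimplexVertex e (a / √2) (b / √2) i j)) I J ∨
      IsRainbowGrid (fun i j => χ (prodSimplexVertex e (a / √2) (b / √2) i j)) I J) :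
    HasMonoCopy χ (cartesianProd (simplexVertices s a) (simplexVertices t b)) ∨
      HasRainbowCopy χ (cartesianProd (simplexVertices s a) (simplexVertices t b)) := by
  set ι₁ := I.orderEmbOfFin hI
  set ι₂ := J.orderEmbOfFin hJ
  set f := EuclideanSpace.embedCoords
    ((finSumFinEquiv.symm.toEmbedding.trans (ι₁.toEmbedding.sumMap ι₂.toEmbedding)).trans e)
  have hf (α : Fin s) (β : Fin t) :
      f (prodSimplexVertex finSumFinEquiv.toEmbedding (a / √2) (b / √2) α β) =
        prodSimplexVertex e (a / √2) (b / √2) (ι₁ α) (ι₂ β) := by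
    simp only [f, embedCoords_prodSimplexVertex]
    simp [prodSimplexVertex]
  have hcong : IsCongruentCopy (cartesianProd (simplexVertices s a) (simplexVertices t b)) f :=
    fun x _ y _ => f.dist_map x y
  rcases h with ⟨k, hk⟩ | hinj
  · refine .inl ⟨f, hcong, k, fun z hz => ?_⟩
    obtain ⟨α, β, rfl⟩ := exists_eq_prodSimplexVertex_of_mem hz
    rw [hf]
    exact hk _ (I.orderEmbOfFin_mem hI α) _ (J.orderEmbOfFin_mem hJ β)
  · refine .inr ⟨f, hcong, fun z hz z' hz' hne heq => hne ?_⟩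
    obtain ⟨α, β, rfl⟩ := exists_eq_prodSimplexVertex_of_mem hz
    obtain ⟨α', β', rfl⟩ := exists_eq_prodSimplexVertex_of_mem hz'
    rw [hf, hf] at heq
    obtain ⟨h₁, h₂⟩ := Prod.ext_iff.1 <| @hinj (ι₁ α, ι₂ β)
      ⟨I.orderEmbOfFin_mem hI α, J.orderEmbOfFin_mem hJ β⟩ (ι₁ α', ι₂ β')
      ⟨I.orderEmbOfFin_mem hI α', J.orderEmbOfFin_mem hJ β'⟩ heq
    rw [ι₁.injective h₁, ι₂.injective h₂]

theorem euclidean_gallai_ramsey_simplex_product_general (s t : ℕ) (hs : 0 < s) (ht : 0 < t)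
    (a b : ℝ) :
    ∃ C : ℕ, ∀ r : ℕ, 0 < r → ∀ χ : EuclideanSpace ℝ (Fin (C * r)) → Fin r,
      HasMonoCopy χ (cartesianProd (simplexVertices s a) (simplexVertices t b)) ∨
      HasRainbowCopy χ (cartesianProd (simplexVertices s a) (simplexVertices t b)) := by
  obtain ⟨M, N, hgrid⟩ := exists_isMonoGrid_or_isRainbowGrid s t hs ht
  refine ⟨M + N, fun r hr χ => ?_⟩
  have : Nonempty (Fin r) := ⟨⟨0, hr⟩⟩
  let e : Fin (M * r) ⊕ Fin (N * r) ↪ Fin ((M + N) * r) :=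
    (finSumFinEquiv.trans (finCongr (add_mul M N r).symm)).toEmbedding
  obtain ⟨I, J, hI, hJ, h⟩ :=
    hgrid (fun i j => χ (prodSimplexVertex e (a / √2) (b / √2) i j)) (by simp) (by simp)
  exact hasMonoCopy_or_hasRainbowCopy_of_subgrid χ e a b hI hJ h

/-- For positive integers `s, t` and side lengths `a, b > 0`, let `Q ⊆ E^{s+t}` be the
Cartesian product of the vertex set of a regular `(s-1)`-simplex of side length `a` and the
vertex set of a regular `(t-1)`-simplex of side length `b`. Then there is a constant `C`
such that for every positive integer `r`, every `r`-coloring of `E^{C·r}` contains a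
monochromatic or rainbow congruent copy of `Q`. -/
theorem euclidean_gallai_ramsey_simplex_product (s t : ℕ) (hs : 0 < s) (ht : 0 < t)
    (a b : ℝ) (ha : 0 < a) (hb : 0 < b) :
    ∃ C : ℕ, ∀ r : ℕ, 0 < r → ∀ χ : EuclideanSpace ℝ (Fin (C * r)) → Fin r,
      HasMonoCopy χ (cartesianProd (simplexVertices s a) (simplexVertices t b)) ∨
      HasRainbowCopy χ (cartesianProd (simplexVertices s a) (simplexVertices t b)) :=
  euclidean_gallai_ramsey_simplex_product_general s t hs ht a b
end

section
/- Let a, b > 0 be real numbers and let K be the vertex set of an a × b rectangle (four points with pairwise distances a, b, a, b, √(a²+b²), √(a²+b²)). Then for every positive integer r, every coloring of Euclidean space E^{8r+36} with r colors contains a monochromatic congruent copy of K or a rainbow congruent copy of K. -/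
/-- The vertex set `{(0,0), (a,0), (0,b), (a,b)} ⊆ E^2` of an `a × b` rectangle. -/
def rectVertices (a b : ℝ) : Set (EuclideanSpace ℝ (Fin 2)) :=
  {x | (x 0 = 0 ∨ x 0 = a) ∧ (x 1 = 0 ∨ x 1 = b)}

/-!
An `a × b` rectangle sits on a grid: for orthonormal vectors `e_k` (rows) and `f_l` (columns),
the four points `(a/√2) e_k + (b/√2) f_l` with `k ∈ {k₁, k₂}`, `l ∈ {l₁, l₂}`, `k₁ ≠ k₂`,
`l₁ ≠ l₂`, form a congruent copy of it. So it suffices that every `r`-colouring of an `n × N` grid with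
`n ≥ 4r + 2` and `2N > 5r + 30` has a monochromatic or rainbow combinatorial rectangle.

Suppose not. Two rows agree in at most `r` columns, otherwise two agreeing columns of the same
colour span a monochromatic rectangle. On the columns where they disagree the colour pairs
pairwise intersect (otherwise a rainbow rectangle appears), so they form a star or a triangle, and
either way one of the two rows has a colour class of size at least `(N - r) / 3`. Hence all rows
but one have such a popular colour, and five rows share one. Two rows share at most one column of
a given colour, so five classes of size `≥ (N - r) / 3` fit into `N` columns with at most `10`
overlaps: `5 (N - r) / 3 ≤ N + 10`, contradicting `2N > 5r + 30`.
-/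

open Finset Function
open scoped InnerProductSpace

theorem sum_card_le_card_biUnion_add_choose_two {ι β : Type*} [DecidableEq ι] [DecidableEq β]
    (A : ι → Finset β) (S : Finset ι)
    (hS : (S : Set ι).Pairwise fun i j => #(A i ∩ A j) ≤ 1) :
    ∑ i ∈ S, #(A i) ≤ #(S.biUnion A) + (#S).choose 2 := by
  induction S using Finset.induction_on with
  | empty => simp
  | insert x s hx ih =>
    have hs : (s : Set ι).Pairwise fun i j => #(A i ∩ A j) ≤ 1 :=
      hS.mono (by simp)
    have hinter : #(A x ∩ s.biUnion A) ≤ #s := by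
      rw [inter_biUnion]
      refine (card_biUnion_le_card_mul _ _ 1 fun i hi => ?_).trans (mul_one _).le
      exact hS (by simp) (by simp [hi]) (by rintro rfl; exact hx hi)
    have hunion := card_union_add_card_inter (A x) (s.biUnion A)
    have hchoose : (#s + 1).choose 2 = (#s).choose 2 + #s := by
      rw [Nat.choose_succ_succ', Nat.choose_one_right, add_comm]
    rw [sum_insert hx, biUnion_insert, card_insert_of_notMem hx, hchoose]
    have := ih hs
    omega

theorem star_or_triangle_of_pairwise_meet {κ α : Type*} {s : Finset κ} (hs : s.Nonempty)
    {p q : κ → α} (hpq : ∀ j ∈ s, p j ≠ q j)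
    (hmeet : ∀ j ∈ s, ∀ j' ∈ s, p j = p j' ∨ p j = q j' ∨ q j = p j' ∨ q j = q j') :
    (∃ x, ∀ j ∈ s, p j = x ∨ q j = x) ∨ ∃ x y z, ∀ j ∈ s, p j = x ∨ p j = y ∨ p j = z := by
  obtain ⟨j₀, hj₀⟩ := hs
  by_cases hx : ∀ j ∈ s, p j = p j₀ ∨ q j = p j₀
  · exact .inl ⟨_, hx⟩
  by_cases hy : ∀ j ∈ s, p j = q j₀ ∨ q j = q j₀
  · exact .inl ⟨_, hy⟩
  push Not at hx hy
  obtain ⟨j₁, hj₁, hx₁, hx₁'⟩ := hx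
  obtain ⟨j₂, hj₂, hy₂, hy₂'⟩ := hy
  -- the pairs at `j₁` and `j₂` are `{q j₀, z}` and `{p j₀, z}` for one third colour `z`
  obtain ⟨z, hz₁, hz₂⟩ : ∃ z, (z = p j₁ ∨ z = q j₁) ∧ (z = p j₂ ∨ z = q j₂) := by
    rcases hmeet j₁ hj₁ j₂ hj₂ with h | h | h | h
    exacts [⟨_, .inl rfl, .inl h⟩, ⟨_, .inl rfl, .inr h⟩, ⟨_, .inr rfl, .inl h⟩,
      ⟨_, .inr rfl, .inr h⟩]
  refine .inr ⟨p j₀, q j₀, z, fun j hj => ?_⟩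
  have := hpq j₀ hj₀
  have := hpq j₁ hj₁
  have := hpq j₂ hj₂
  have := hmeet j hj j₀ hj₀
  have := hmeet j hj j₁ hj₁
  have := hmeet j hj j₂ hj₂
  have := hmeet j₁ hj₁ j₀ hj₀
  have := hmeet j₂ hj₂ j₀ hj₀
  -- otherwise `q j` would lie in each of `{p j₀, q j₀}`, `{q j₀, z}` and `{p j₀, z}`
  grind

section GridRect

variable {ι κ α : Type*}

def HasMonoGridRect (c : ι → κ → α) : Prop :=
  ∃ i i' j j', i ≠ i' ∧ j ≠ j' ∧
    ∃ col, ∀ p ∈ ({i, i'} ×ˢ {j, j'} : Set (ι × κ)), uncurry c p = col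

def HasRainbowGridRect (c : ι → κ → α) : Prop :=
  ∃ i i' j j', i ≠ i' ∧ j ≠ j' ∧ Set.InjOn (uncurry c) ({i, i'} ×ˢ {j, j'})

variable {c : ι → κ → α} {i i' : ι} {j j' : κ}

theorem hasMonoGridRect_of_eq (hi : i ≠ i') (hj : j ≠ j') (h₁ : c i j' = c i j)
    (h₂ : c i' j = c i j) (h₃ : c i' j' = c i j) : HasMonoGridRect c := by
  refine ⟨i, i', j, j', hi, hj, c i j, ?_⟩
  simp [or_imp, forall_and, h₁, h₂, h₃]

theorem hasRainbowGridRect_of_ne (hi : i ≠ i') (hj : j ≠ j') (h₁ : c i j ≠ c i j')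
    (h₂ : c i j ≠ c i' j) (h₃ : c i j ≠ c i' j') (h₄ : c i j' ≠ c i' j)
    (h₅ : c i j' ≠ c i' j') (h₆ : c i' j ≠ c i' j') : HasRainbowGridRect c := by
  refine ⟨i, i', j, j', hi, hj, ?_⟩
  simp [Set.InjOn, or_imp, forall_and, *, hi.symm, hj.symm, h₁.symm, h₂.symm, h₃.symm, h₄.symm,
    h₅.symm, h₆.symm]

variable [Fintype κ] [DecidableEq α]

theorem card_agree_le_of_not_hasMonoGridRect [Fintype α] (hc : ¬HasMonoGridRect c)
    (hi : i ≠ i') : #{j | c i j = c i' j} ≤ Fintype.card α := by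
  by_contra! hlt
  obtain ⟨j, hj, j', hj', hjj, heq⟩ :=
    exists_ne_map_eq_of_card_lt_of_maps_to (t := univ) (f := c i) hlt (by simp)
  simp only [mem_filter, mem_univ, true_and] at hj hj'
  exact hc (hasMonoGridRect_of_eq hi hjj heq.symm hj.symm (hj'.symm.trans heq.symm))

theorem card_filter_and_le_one_of_not_hasMonoGridRect (hc : ¬HasMonoGridRect c) (hi : i ≠ i')
    (m : α) : #{j | c i j = m ∧ c i' j = m} ≤ 1 := by
  refine card_le_one.2 fun j hj j' hj' => ?_
  by_contra hjj
  simp only [mem_filter, mem_univ, true_and] at hj hj'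
  exact hc (hasMonoGridRect_of_eq hi hjj (hj'.1.trans hj.1.symm) (hj.2.trans hj.1.symm)
    (hj'.2.trans hj.1.symm))

theorem exists_card_disagree_le_three_mul (hc : ¬HasRainbowGridRect c) (hi : i ≠ i')
    (hD : ({j | c i j ≠ c i' j} : Finset κ).Nonempty) :
    ∃ m, #{j | c i j ≠ c i' j} ≤ 3 * #{j | c i j = m} ∨
      #{j | c i j ≠ c i' j} ≤ 3 * #{j | c i' j = m} := by
  classical
  set D : Finset κ := {j | c i j ≠ c i' j}
  have hpq : ∀ j ∈ D, c i j ≠ c i' j := by simp [D]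
  have hmeet : ∀ j ∈ D, ∀ j' ∈ D,
      c i j = c i j' ∨ c i j = c i' j' ∨ c i' j = c i j' ∨ c i' j = c i' j' := by
    intro j hj j' hj'
    by_cases hjj : j = j'
    · exact .inl (congrArg (c i) hjj)
    by_contra! h
    exact hc (hasRainbowGridRect_of_ne hi hjj h.1 (hpq j hj) h.2.1 (Ne.symm h.2.2.1)
      (hpq j' hj') h.2.2.2)
  rcases star_or_triangle_of_pairwise_meet hD hpq hmeet with ⟨x, hx⟩ | ⟨x, y, z, hxyz⟩
  · have hsub : D ⊆ ({j | c i j = x} : Finset κ) ∪ ({j | c i' j = x} : Finset κ) := by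
      intro j hj
      simpa using hx j hj
    have := (card_le_card hsub).trans (card_union_le _ _)
    exact ⟨x, by omega⟩
  · have hsub : D ⊆ ({j | c i j = x} : Finset κ) ∪ ({j | c i j = y} : Finset κ) ∪
        ({j | c i j = z} : Finset κ) := by
      intro j hj
      simpa [or_assoc] using hxyz j hj
    have := (card_le_card hsub).trans ((card_union_le _ _).trans
      (Nat.add_le_add_right (card_union_le _ _) _))
    by_cases hx : #D ≤ 3 * #{j | c i j = x}
    · exact ⟨x, .inl hx⟩
    by_cases hy : #D ≤ 3 * #{j | c i j = y}
    · exact ⟨y, .inl hy⟩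
    exact ⟨z, .inl (by omega)⟩

theorem exists_card_le_add_three_mul [Fintype α] (hmono : ¬HasMonoGridRect c)
    (hrain : ¬HasRainbowGridRect c) (hi : i ≠ i') (hκ : Fintype.card α < Fintype.card κ) :
    ∃ m, Fintype.card κ ≤ Fintype.card α + 3 * #{j | c i j = m} ∨
      Fintype.card κ ≤ Fintype.card α + 3 * #{j | c i' j = m} := by
  have hagree := card_agree_le_of_not_hasMonoGridRect hmono hi
  have hsplit : #{j | c i j = c i' j} + #{j | c i j ≠ c i' j} = Fintype.card κ :=
    card_filter_add_card_filter_not _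
  obtain ⟨m, hm⟩ := exists_card_disagree_le_three_mul hrain hi (card_pos.1 (by omega))
  exact ⟨m, by omega⟩

open Fintype in
theorem exists_five_le_card_rows_large_colorClass [Fintype ι] [Fintype α]
    (hmono : ¬HasMonoGridRect c) (hrain : ¬HasRainbowGridRect c) (hι : 4 * card α + 1 < card ι)
    (hκ : card α < card κ) : ∃ m, 5 ≤ #{i | card κ ≤ card α + 3 * #{j | c i j = m}} := by
  classical
  by_contra! hsmall
  let P : α → Finset ι := fun m => {i | card κ ≤ card α + 3 * #{j | c i j = m}}
  have hcover := card_biUnion_le_card_mul univ P 4 fun m _ => Nat.le_of_lt_succ (hsmall m)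
  have hrest : #(univ \ univ.biUnion P) ≤ 1 := card_le_one.2 fun i hi i' hi' => by
    by_contra hii
    obtain ⟨m, h | h⟩ := exists_card_le_add_three_mul hmono hrain hii hκ
    · exact (mem_sdiff.1 hi).2 (mem_biUnion.2 ⟨m, mem_univ _, by simpa [P] using h⟩)
    · exact (mem_sdiff.1 hi').2 (mem_biUnion.2 ⟨m, mem_univ _, by simpa [P] using h⟩)
  have := card_sdiff_add_card_eq_card (subset_univ (univ.biUnion P))
  simp only [card_univ] at hcover this
  omega

end GridRect

open Fintype in
theorem hasMonoGridRect_or_hasRainbowGridRect {ι κ α : Type*} [Fintype ι] [Fintype κ]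
    [Fintype α] [DecidableEq α] (c : ι → κ → α) (hι : 4 * card α + 1 < card ι)
    (hκ : 5 * card α + 30 < 2 * card κ) : HasMonoGridRect c ∨ HasRainbowGridRect c := by
  classical
  by_contra! h
  obtain ⟨hmono, hrain⟩ := h
  obtain ⟨m, hm5⟩ := exists_five_le_card_rows_large_colorClass hmono hrain hι (by omega)
  obtain ⟨S, hSP, hS⟩ := exists_subset_card_eq hm5
  have hpack := sum_card_le_card_biUnion_add_choose_two (fun i => {j | c i j = m}) S
    fun i _ i' _ hii => by
      simpa only [filter_and] using card_filter_and_le_one_of_not_hasMonoGridRect hmono hii m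
  have hlarge : ∑ i ∈ S, card κ ≤ ∑ i ∈ S, (card α + 3 * #{j | c i j = m}) :=
    sum_le_sum fun i hi => (mem_filter.1 (hSP hi)).2
  have hunion := card_le_univ (S.biUnion fun i => {j | c i j = m})
  rw [sum_add_distrib, ← mul_sum, sum_const, sum_const, hS] at hlarge
  rw [hS, show Nat.choose 5 2 = 10 from rfl] at hpack
  simp only [smul_eq_mul] at hlarge
  omega

section GridPoint

variable {E ι κ : Type*} [NormedAddCommGroup E] [InnerProductSpace ℝ E]

theorem Orthonormal.norm_sub_sq [DecidableEq ι] {v : ι → E} (hv : Orthonormal ℝ v) (x y : ι) :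
    ‖v x - v y‖ ^ 2 = if x = y then 0 else 2 := by
  split_ifs with h
  · simp [h]
  · rw [norm_sub_sq_real, hv.norm_eq_one, hv.norm_eq_one, hv.inner_eq_zero h]
    norm_num

noncomputable def gridPoint (v : ι ⊕ κ → E) (a b : ℝ) (k : ι) (l : κ) : E :=
  (a / √2) • v (.inl k) + (b / √2) • v (.inr l)

theorem dist_gridPoint_sq [DecidableEq ι] [DecidableEq κ] {v : ι ⊕ κ → E}
    (hv : Orthonormal ℝ v) (a b : ℝ) (k k' : ι) (l l' : κ) :
    dist (gridPoint v a b k l) (gridPoint v a b k' l') ^ 2 =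
      (if k = k' then 0 else a ^ 2) + (if l = l' then 0 else b ^ 2) := by
  have horth : ⟪(a / √2) • (v (.inl k) - v (.inl k')),
      (b / √2) • (v (.inr l) - v (.inr l'))⟫_ℝ = 0 := by
    simp [inner_smul_left, inner_smul_right, inner_sub_left, inner_sub_right,
      hv.inner_eq_zero]
  have hsplit : gridPoint v a b k l - gridPoint v a b k' l' =
      (a / √2) • (v (.inl k) - v (.inl k')) + (b / √2) • (v (.inr l) - v (.inr l')) := by
    simp only [gridPoint, smul_sub]
    abel
  rw [dist_eq_norm, hsplit, sq, norm_add_sq_eq_norm_sq_add_norm_sq_real horth, ← sq, ← sq,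
    norm_smul, norm_smul, mul_pow, mul_pow, hv.norm_sub_sq, hv.norm_sub_sq]
  simp only [Real.norm_eq_abs, sq_abs, div_pow, Real.sq_sqrt zero_le_two, Sum.inl.injEq,
    Sum.inr.injEq]
  split_ifs <;> ring

end GridPoint

section RectCorner

variable {ι : Type*} {k k' : ι} {a s t : ℝ}

noncomputable def selectByZero (k k' : ι) (s : ℝ) : ι := if s = 0 then k else k'

theorem selectByZero_eq_iff (hk : k ≠ k') (hs : s = 0 ∨ s = a) (ht : t = 0 ∨ t = a) :
    selectByZero k k' s = selectByZero k k' t ↔ s = t := by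
  unfold selectByZero
  rcases hs with rfl | rfl <;> rcases ht with rfl | rfl <;> split_ifs <;> simp_all [eq_comm]

theorem ite_selectByZero_eq_sq_sub [DecidableEq ι] (hk : k ≠ k') (hs : s = 0 ∨ s = a)
    (ht : t = 0 ∨ t = a) :
    (if selectByZero k k' s = selectByZero k k' t then 0 else a ^ 2) = (s - t) ^ 2 := by
  by_cases hst : s = t
  · simp [hst]
  · rw [if_neg ((selectByZero_eq_iff hk hs ht).not.2 hst)]
    rcases hs with rfl | rfl <;> rcases ht with rfl | rfl <;> simp_all

variable {κ : Type*} {l l' : κ} {b : ℝ}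

noncomputable def rectCorner (k k' : ι) (l l' : κ) (x : EuclideanSpace ℝ (Fin 2)) : ι × κ :=
  (selectByZero k k' (x 0), selectByZero l l' (x 1))

theorem rectCorner_mem (x : EuclideanSpace ℝ (Fin 2)) :
    rectCorner k k' l l' x ∈ ({k, k'} ×ˢ {l, l'} : Set (ι × κ)) := by
  simp only [rectCorner, selectByZero, Set.mem_prod, Set.mem_insert_iff, Set.mem_singleton_iff]
  constructor <;> split_ifs <;> simp

theorem injOn_rectCorner (hk : k ≠ k') (hl : l ≠ l') :
    Set.InjOn (rectCorner k k' l l') (rectVertices a b) := by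
  rintro x ⟨hx0, hx1⟩ y ⟨hy0, hy1⟩ h
  simp only [rectCorner, Prod.mk.injEq, selectByZero_eq_iff hk hx0 hy0,
    selectByZero_eq_iff hl hx1 hy1] at h
  ext i
  fin_cases i
  exacts [h.1, h.2]

theorem isCongruentCopy_rectVertices [DecidableEq ι] [DecidableEq κ] {d : ℕ}
    {v : ι ⊕ κ → EuclideanSpace ℝ (Fin d)} (hv : Orthonormal ℝ v) (hk : k ≠ k') (hl : l ≠ l') :
    IsCongruentCopy (rectVertices a b) (uncurry (gridPoint v a b) ∘ rectCorner k k' l l') := by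
  rintro x ⟨hx0, hx1⟩ y ⟨hy0, hy1⟩
  refine (sq_eq_sq₀ dist_nonneg dist_nonneg).1 ?_
  rw [comp_apply, comp_apply, rectCorner, rectCorner, uncurry_apply_pair, uncurry_apply_pair,
    dist_gridPoint_sq hv, ite_selectByZero_eq_sq_sub hk hx0 hy0,
    ite_selectByZero_eq_sq_sub hl hx1 hy1, EuclideanSpace.dist_eq, Real.sq_sqrt (by positivity),
    Fin.sum_univ_two, Real.dist_eq, Real.dist_eq, sq_abs, sq_abs]

variable [DecidableEq ι] [DecidableEq κ] {r d : ℕ} {v : ι ⊕ κ → EuclideanSpace ℝ (Fin d)}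
  {χ : EuclideanSpace ℝ (Fin d) → Fin r}

theorem HasMonoGridRect.hasMonoCopy_rectVertices (hv : Orthonormal ℝ v)
    (h : HasMonoGridRect fun k l => χ (gridPoint v a b k l)) :
    HasMonoCopy χ (rectVertices a b) := by
  obtain ⟨k, k', l, l', hk, hl, col, hcol⟩ := h
  exact ⟨_, isCongruentCopy_rectVertices hv hk hl, col, fun x _ => hcol _ (rectCorner_mem x)⟩

theorem HasRainbowGridRect.hasRainbowCopy_rectVertices (hv : Orthonormal ℝ v)
    (h : HasRainbowGridRect fun k l => χ (gridPoint v a b k l)) :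
    HasRainbowCopy χ (rectVertices a b) := by
  obtain ⟨k, k', l, l', hk, hl, hinj⟩ := h
  exact ⟨_, isCongruentCopy_rectVertices hv hk hl, fun x hx y hy hxy =>
    (hinj.comp (injOn_rectCorner hk hl) fun x _ => rectCorner_mem x).ne hx hy hxy⟩

end RectCorner

theorem hasMonoCopy_or_hasRainbowCopy_rectVertices {r n N d : ℕ} (a b : ℝ) (hn : 4 * r + 1 < n)
    (hN : 5 * r + 30 < 2 * N) (hd : n + N ≤ d) (χ : EuclideanSpace ℝ (Fin d) → Fin r) :
    HasMonoCopy χ (rectVertices a b) ∨ HasRainbowCopy χ (rectVertices a b) := by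
  obtain ⟨e⟩ : Nonempty (Fin n ⊕ Fin N ↪ Fin d) :=
    Function.Embedding.nonempty_of_card_le (by simpa using hd)
  have hv := (EuclideanSpace.basisFun (Fin d) ℝ).orthonormal.comp e e.injective
  exact (hasMonoGridRect_or_hasRainbowGridRect _ (by simpa using hn) (by simpa using hN)).imp
    (·.hasMonoCopy_rectVertices hv) (·.hasRainbowCopy_rectVertices hv)

theorem euclidean_gallai_ramsey_rectangle_general (a b : ℝ)
    (r : ℕ) (χ : EuclideanSpace ℝ (Fin (8 * r + 36)) → Fin r) :
    HasMonoCopy χ (rectVertices a b) ∨ HasRainbowCopy χ (rectVertices a b) :=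
  hasMonoCopy_or_hasRainbowCopy_rectVertices (n := 4 * r + 2) (N := 4 * r + 34) a b
    (by omega) (by omega) (by omega) χ

/-- For reals `a, b > 0`, let `K` be the vertex set of an `a × b` rectangle. Then for every
positive integer `r`, every `r`-coloring of `E^{8r+36}` contains a monochromatic or rainbow
congruent copy of `K`. -/
theorem euclidean_gallai_ramsey_rectangle (a b : ℝ) (ha : 0 < a) (hb : 0 < b)
    (r : ℕ) (hr : 0 < r) (χ : EuclideanSpace ℝ (Fin (8 * r + 36)) → Fin r) :
    HasMonoCopy χ (rectVertices a b) ∨ HasRainbowCopy χ (rectVertices a b) :=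
  euclidean_gallai_ramsey_rectangle_general a b r χ
end
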